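/- arXiv:math/0404349 — 6 statements merged into one kernel-verified Lean document; each statement's English description precedes it below -/
import Mathlib

section
/- Let X ∈ S^n and let f : ℝ^n → ℝ be a symmetric function (f(Px)ated = f(x) for every n×n permutation matrix P and every x in its domain) that is differentiable at λ(X). Then f∘λ is (Fréchet) differentiable at X, and for every orthogonal matrix V with X = V · Diag λ(X) · Vᵀ and every H ∈ S^n, the derivative satisfies ∇(f∘λ)(X)[H] = tr( ( V · Diag(∇f(λ(X))) · Vᵀ ) · H ); i.e. ∇(f∘λ)(X) = V (Diag ∇f(λ(X))) Vᵀ. -/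
open Matrix

noncomputable section

attribute [local instance] Matrix.normedAddCommGroup Matrix.normedSpace

/-- The space of `n × n` real matrices. -/
abbrev Mat (n : ℕ) := Matrix (Fin n) (Fin n) ℝ

/-- The subspace `S^n` of symmetric matrices inside `M^n`. -/
def symSub (n : ℕ) : Submodule ℝ (Mat n) where
  carrier := {A | A.IsSymm}
  add_mem' := fun ha hb => ha.add hb
  zero_mem' := Matrix.isSymm_zero
  smul_mem' := fun c _ hA => hA.smul c

/-- `eig` assigns to every symmetric matrix its vector of eigenvalues ordered
nonincreasingly, as witnessed by an orthogonal diagonalization. -/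
def IsEigsOf {n : ℕ} (eig : Mat n → (Fin n → ℝ)) : Prop :=
  ∀ A : Mat n, A.IsSymm →
    (∀ i j : Fin n, i ≤ j → eig A j ≤ eig A i) ∧
    ∃ V : Mat n, Vᵀ * V = 1 ∧ V * Vᵀ = 1 ∧ A = V * Matrix.diagonal (eig A) * Vᵀ

/-!
Write `X = V (Diag μ) Vᵀ`, `Z = U (Diag ν) Uᵀ` with `μ = λ(X)`, `ν = λ(Z)`, and `H = Z - X`.
For an initial segment `S` of indices, Ky Fan's inequality `tr (Q Y) ≤ ∑ i ∈ S, λᵢ(Y)` for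
orthogonal projections `Q` of rank `|S|`, applied to the spectral projections `P_S` of `X` and
`Q_S` of `Z`, squeezes `∑ i ∈ S, (νᵢ - μᵢ)` between `tr (P_S H)` and `tr (Q_S H)`; hence `λ` is
Lipschitz. If moreover `μ` drops by `δ > 0` across `S`, a quantitative Ky Fan inequality gives
`∑ i ∈ S, (νᵢ - μᵢ) - tr (P_S H) ≤ ‖H‖²/(2δ)` (Frobenius norm). As `f` is symmetric,
`w = ∇f(μ)` is constant on blocks of equal eigenvalues, so Abel summation writes `w` as a
combination of indicators of initial segments across which `μ` drops. Hence
`⟨ν - μ, w⟩ = tr (V (Diag w) Vᵀ H) + O(‖H‖²)`, and the first-order expansion of `f` at `μ`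
gives the derivative.
-/
open Finset Asymptotics Filter Topology

section KyFan

variable {ι : Type*} [Fintype ι]

lemma Matrix.IsSymm.conj {M : Matrix ι ι ℝ} (hM : M.IsSymm) (V : Matrix ι ι ℝ) :
    (V * M * Vᵀ).IsSymm := by
  simp only [IsSymm, transpose_mul, transpose_transpose, hM.eq, Matrix.mul_assoc]

lemma diag_mem_Icc_of_isSymm_of_mul_self {Q : Matrix ι ι ℝ} (hQ : Q.IsSymm) (hQQ : Q * Q = Q)
    (i : ι) : Q i i ∈ Set.Icc 0 1 := by
  have hsq : Q i i = ∑ j, Q i j ^ 2 := by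
    conv_lhs => rw [← hQQ]
    simp only [mul_apply, sq, hQ.apply i]
  have hle : Q i i ^ 2 ≤ Q i i :=
    hsq ▸ single_le_sum (fun j _ => sq_nonneg (Q i j)) (mem_univ i)
  have h0 : 0 ≤ Q i i := hsq ▸ sum_nonneg fun j _ => sq_nonneg _
  exact ⟨h0, by nlinarith⟩

lemma trace_mul_transpose_self_nonneg (M : Matrix ι ι ℝ) : 0 ≤ (M * Mᵀ).trace :=
  sum_nonneg fun _ _ => sum_nonneg fun _ _ => mul_self_nonneg _

lemma sq_trace_mul_le (M N : Matrix ι ι ℝ) :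
    (M * N).trace ^ 2 ≤ (M * Mᵀ).trace * (N * Nᵀ).trace := by
  have h := sum_mul_sq_le_sq_mul_sq (univ : Finset (ι × ι)) (fun p => M p.1 p.2)
    (fun p => N p.2 p.1)
  simp only [Fintype.sum_prod_type] at h
  rw [Finset.sum_comm (f := fun x y => N y x ^ 2)] at h
  simpa [trace, mul_apply, sq] using h

lemma exists_sep_of_gap {ν : ι → ℝ} {S : Finset ι} {δ : ℝ}
    (hgap : ∀ s ∈ S, ∀ t ∉ S, ν t + δ ≤ ν s) :
    ∃ c, (∀ s ∈ S, c + δ ≤ ν s) ∧ ∀ t ∉ S, ν t ≤ c := by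
  rcases S.eq_empty_or_nonempty with rfl | hS
  · exact ⟨⨆ t, ν t, by simp, fun t _ => le_ciSup (Finite.bddAbove_range ν) t⟩
  · refine ⟨S.inf' hS ν - δ, fun s hs => by linarith [inf'_le ν hs], fun t ht => ?_⟩
    linarith [le_inf' hS ν fun s hs => hgap s hs t ht]

variable [DecidableEq ι]

lemma sum_mul_le_of_sep {a ν : ι → ℝ} {S : Finset ι} {c δ : ℝ}
    (ha : ∀ i, a i ∈ Set.Icc 0 1) (hsum : ∑ i, a i = S.card)
    (hS : ∀ s ∈ S, c + δ ≤ ν s) (hSc : ∀ t ∉ S, ν t ≤ c) :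
    ∑ i, a i * ν i ≤ ∑ i ∈ S, ν i - δ * (S.card - ∑ i ∈ S, a i) := by
  have key : ∀ i, a i * ν i - c * a i ≤ if i ∈ S then ν i - c - δ * (1 - a i) else 0 := by
    intro i
    obtain ⟨h0, h1⟩ := ha i
    split_ifs with hi
    · nlinarith [hS i hi]
    · nlinarith [hSc i hi]
  have := sum_le_sum fun i (_ : i ∈ univ) => key i
  simp only [sum_ite_mem, univ_inter, sum_sub_distrib, ← mul_sum, hsum, sum_const,
    nsmul_eq_mul, mul_one] at this
  linarith

lemma trace_mul_mul_transpose {V : Matrix ι ι ℝ} (hV : Vᵀ * V = 1) (M : Matrix ι ι ℝ) :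
    (V * M * Vᵀ).trace = M.trace := by
  rw [trace_mul_comm, ← Matrix.mul_assoc, hV, Matrix.one_mul]

lemma conj_mul_conj {V : Matrix ι ι ℝ} (hV : Vᵀ * V = 1) (M N : Matrix ι ι ℝ) :
    V * M * Vᵀ * (V * N * Vᵀ) = V * (M * N) * Vᵀ := by
  simp only [Matrix.mul_assoc]
  rw [← Matrix.mul_assoc Vᵀ, hV, Matrix.one_mul]

lemma trace_mul_conj_diagonal (Q U : Matrix ι ι ℝ) (ν : ι → ℝ) :
    (Q * (U * diagonal ν * Uᵀ)).trace = ∑ i, (Uᵀ * Q * U) i i * ν i := by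
  rw [← Matrix.mul_assoc, trace_mul_comm, ← Matrix.mul_assoc, ← Matrix.mul_assoc]
  simp [trace]

/-- For orthogonal `U`, the orthogonal projection onto the span of the columns of `U` indexed
by `S`. -/
def colProj (U : Matrix ι ι ℝ) (S : Finset ι) : Matrix ι ι ℝ :=
  U * diagonal (fun i => if i ∈ S then 1 else 0) * Uᵀ

lemma colProj_isSymm (U : Matrix ι ι ℝ) (S : Finset ι) : (colProj U S).IsSymm :=
  (isSymm_diagonal _).conj U

lemma colProj_mul_self {U : Matrix ι ι ℝ} (hU : Uᵀ * U = 1) (S : Finset ι) :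
    colProj U S * colProj U S = colProj U S := by
  rw [colProj, conj_mul_conj hU, diagonal_mul_diagonal]
  congr 3
  ext i
  split_ifs <;> simp

lemma trace_colProj {U : Matrix ι ι ℝ} (hU : Uᵀ * U = 1) (S : Finset ι) :
    (colProj U S).trace = S.card := by
  rw [colProj, trace_mul_mul_transpose hU, trace_diagonal, sum_boole]
  simp

lemma trace_colProj_mul_conj_diagonal {U : Matrix ι ι ℝ} (hU : Uᵀ * U = 1) (S : Finset ι)
    (ν : ι → ℝ) : (colProj U S * (U * diagonal ν * Uᵀ)).trace = ∑ i ∈ S, ν i := by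
  rw [colProj, conj_mul_conj hU, trace_mul_mul_transpose hU, diagonal_mul_diagonal,
    trace_diagonal]
  simp

theorem trace_mul_conj_le_of_gap {Q U : Matrix ι ι ℝ} {ν : ι → ℝ} {S : Finset ι}
    {δ : ℝ} (hQ : Q.IsSymm) (hQQ : Q * Q = Q) (hQS : Q.trace = S.card) (hU : Uᵀ * U = 1)
    (hgap : ∀ s ∈ S, ∀ t ∉ S, ν t + δ ≤ ν s) :
    (Q * (U * diagonal ν * Uᵀ)).trace ≤
      ∑ i ∈ S, ν i - δ * (S.card - (Q * colProj U S).trace) := by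
  obtain ⟨c, hS, hSc⟩ := exists_sep_of_gap hgap
  have hU' : Uᵀᵀ * Uᵀ = 1 := by rw [transpose_transpose]; exact mul_eq_one_comm.mp hU
  have hQ' : (Uᵀ * Q * U).IsSymm := by simpa using hQ.conj Uᵀ
  have hQQ' : Uᵀ * Q * U * (Uᵀ * Q * U) = Uᵀ * Q * U := by
    simpa [hQQ] using conj_mul_conj hU' Q Q
  have hsum : ∑ i, (Uᵀ * Q * U) i i = S.card := by
    simpa [trace] using (trace_mul_mul_transpose hU' Q).trans hQS
  -- in the basis of the columns of `U`, the diagonal of `Q` lies in `[0, 1]` and sums to `|S|`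
  rw [trace_mul_conj_diagonal, colProj, trace_mul_conj_diagonal]
  simpa [mul_ite, sum_ite_mem] using
    sum_mul_le_of_sep (diag_mem_Icc_of_isSymm_of_mul_self hQ' hQQ') hsum hS hSc

theorem trace_mul_conj_le_of_forall_le {Q U : Matrix ι ι ℝ} {ν : ι → ℝ} {S : Finset ι}
    (hQ : Q.IsSymm) (hQQ : Q * Q = Q) (hQS : Q.trace = S.card) (hU : Uᵀ * U = 1)
    (hsep : ∀ s ∈ S, ∀ t ∉ S, ν t ≤ ν s) :
    (Q * (U * diagonal ν * Uᵀ)).trace ≤ ∑ i ∈ S, ν i := by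
  simpa using trace_mul_conj_le_of_gap (δ := 0) hQ hQQ hQS hU (by simpa using hsep)

end KyFan

section PartialSums

variable {ι : Type*} [Fintype ι] [DecidableEq ι] {V U X Z : Matrix ι ι ℝ}
  {μ ν : ι → ℝ} {S : Finset ι}

lemma sum_sub_sum_le_trace_colProj_mul (hV : Vᵀ * V = 1) (hU : Uᵀ * U = 1)
    (hX : X = V * diagonal μ * Vᵀ) (hZ : Z = U * diagonal ν * Uᵀ)
    (hμ : ∀ s ∈ S, ∀ t ∉ S, μ t ≤ μ s) :
    ∑ i ∈ S, ν i - ∑ i ∈ S, μ i ≤ (colProj U S * (Z - X)).trace := by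
  have hQX := trace_mul_conj_le_of_forall_le (colProj_isSymm U S) (colProj_mul_self hU S)
    (trace_colProj hU S) hV hμ
  rw [Matrix.mul_sub, trace_sub, hZ, trace_colProj_mul_conj_diagonal hU, hX]
  linarith

lemma trace_colProj_mul_le_sum_sub_sum (hV : Vᵀ * V = 1) (hU : Uᵀ * U = 1)
    (hX : X = V * diagonal μ * Vᵀ) (hZ : Z = U * diagonal ν * Uᵀ)
    (hν : ∀ s ∈ S, ∀ t ∉ S, ν t ≤ ν s) :
    (colProj V S * (Z - X)).trace ≤ ∑ i ∈ S, ν i - ∑ i ∈ S, μ i := by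
  have h := sum_sub_sum_le_trace_colProj_mul hU hV hZ hX hν
  rw [← neg_sub Z X, Matrix.mul_neg, trace_neg] at h
  linarith

lemma sq_sum_sub_sum_le (hV : Vᵀ * V = 1) (hU : Uᵀ * U = 1)
    (hX : X = V * diagonal μ * Vᵀ) (hZ : Z = U * diagonal ν * Uᵀ)
    (hμ : ∀ s ∈ S, ∀ t ∉ S, μ t ≤ μ s)
    (hν : ∀ s ∈ S, ∀ t ∉ S, ν t ≤ ν s) :
    (∑ i ∈ S, ν i - ∑ i ∈ S, μ i) ^ 2 ≤ S.card * ((Z - X) * (Z - X)ᵀ).trace := by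
  have hsq : ∀ {W : Matrix ι ι ℝ}, Wᵀ * W = 1 →
      (colProj W S * (Z - X)).trace ^ 2 ≤ S.card * ((Z - X) * (Z - X)ᵀ).trace := by
    intro W hW
    simpa [(colProj_isSymm W S).eq, colProj_mul_self hW, trace_colProj hW] using
      sq_trace_mul_le (colProj W S) (Z - X)
  have hup := sum_sub_sum_le_trace_colProj_mul hV hU hX hZ hμ
  have hlow := trace_colProj_mul_le_sum_sub_sum hV hU hX hZ hν
  rcases le_total 0 (∑ i ∈ S, ν i - ∑ i ∈ S, μ i) with h | h
  · nlinarith [hsq hU]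
  · nlinarith [hsq hV]

lemma sum_sub_sum_sub_trace_le_of_gap (hV : Vᵀ * V = 1) (hU : Uᵀ * U = 1)
    (hX : X = V * diagonal μ * Vᵀ) (hZ : Z = U * diagonal ν * Uᵀ) {δ : ℝ} (hδ : 0 < δ)
    (hgap : ∀ s ∈ S, ∀ t ∉ S, μ t + δ ≤ μ s) :
    ∑ i ∈ S, ν i - ∑ i ∈ S, μ i - (colProj V S * (Z - X)).trace ≤
      ((Z - X) * (Z - X)ᵀ).trace / (2 * δ) := by
  set P := colProj V S
  set Q := colProj U S
  set F := ((Z - X) * (Z - X)ᵀ).trace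
  set m := (S.card : ℝ) - (Q * P).trace
  have hQX : (Q * X).trace ≤ ∑ i ∈ S, μ i - δ * m := hX ▸
    trace_mul_conj_le_of_gap (colProj_isSymm U S) (colProj_mul_self hU S) (trace_colProj hU S)
      hV hgap
  have hQZ : (Q * Z).trace = ∑ i ∈ S, ν i := hZ ▸ trace_colProj_mul_conj_diagonal hU S ν
  -- `m ≥ 0` since it is half the squared Frobenius distance between the two projections
  have hQP : ((Q - P) * (Q - P)ᵀ).trace = 2 * m := by
    rw [transpose_sub, (colProj_isSymm U S).eq, (colProj_isSymm V S).eq, sub_mul, mul_sub,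
      mul_sub, colProj_mul_self hU, colProj_mul_self hV, trace_sub, trace_sub, trace_sub,
      trace_colProj hU, trace_colProj hV, trace_mul_comm P Q]
    ring
  have hm : 0 ≤ m := by linarith [trace_mul_transpose_self_nonneg (Q - P)]
  have hF : 0 ≤ F := trace_mul_transpose_self_nonneg (Z - X)
  have hr : ((Q - P) * (Z - X)).trace ^ 2 ≤ (δ * m + F / (2 * δ)) ^ 2 := by
    have hamgm : 4 * (δ * m) * (F / (2 * δ)) = 2 * m * F := by field_simp; ring
    nlinarith [sq_trace_mul_le (Q - P) (Z - X), sq_nonneg (δ * m - F / (2 * δ))]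
  have hr' := (le_abs_self _).trans (abs_le_of_sq_le_sq hr (by positivity))
  rw [sub_mul, trace_sub, Matrix.mul_sub, Matrix.mul_sub, trace_sub, trace_sub] at hr'
  rw [Matrix.mul_sub, trace_sub]
  linarith

end PartialSums

section Ordered

variable {n : ℕ}

def initSeg (n k : ℕ) : Finset (Fin n) := {i | (i : ℕ) < k}

@[simp] lemma mem_initSeg {k : ℕ} {i : Fin n} : i ∈ initSeg n k ↔ (i : ℕ) < k := by
  simp [initSeg]

lemma initSeg_succ (i : Fin n) : initSeg n (i + 1) = insert i (initSeg n i) := by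
  ext j
  simp only [mem_initSeg, mem_insert, Fin.ext_iff]
  omega

lemma Antitone.le_of_mem_initSeg {ν : Fin n → ℝ} (hν : Antitone ν) {k : ℕ} :
    ∀ s ∈ initSeg n k, ∀ t ∉ initSeg n k, ν t ≤ ν s := by
  intro s hs t ht
  simp only [mem_initSeg, not_lt] at hs ht
  exact hν (Fin.le_def.2 (by omega))

lemma sq_sub_le_of_antitone {V U X Z : Mat n} {μ ν : Fin n → ℝ} (hV : Vᵀ * V = 1)
    (hU : Uᵀ * U = 1) (hX : X = V * diagonal μ * Vᵀ) (hZ : Z = U * diagonal ν * Uᵀ)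
    (hμ : Antitone μ) (hν : Antitone ν) (i : Fin n) :
    (ν i - μ i) ^ 2 ≤ 4 * n * ((Z - X) * (Z - X)ᵀ).trace := by
  have hF := trace_mul_transpose_self_nonneg (Z - X)
  have hcard : ∀ k, ((initSeg n k).card : ℝ) ≤ n := fun k => by
    exact_mod_cast (card_le_univ _).trans_eq (Fintype.card_fin n)
  have h₁ := sq_sum_sub_sum_le hV hU hX hZ (hμ.le_of_mem_initSeg (k := i + 1))
    (hν.le_of_mem_initSeg (k := i + 1))
  have h₀ := sq_sum_sub_sum_le hV hU hX hZ (hμ.le_of_mem_initSeg (k := i))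
    (hν.le_of_mem_initSeg (k := i))
  have hsucc : ∀ x : Fin n → ℝ,
      ∑ j ∈ initSeg n (i + 1), x j = x i + ∑ j ∈ initSeg n i, x j :=
    fun x => by rw [initSeg_succ, sum_insert (by simp)]
  rw [hsucc, hsucc, add_sub_add_comm] at h₁
  nlinarith [mul_le_mul_of_nonneg_right (hcard i) hF, mul_le_mul_of_nonneg_right (hcard (i + 1)) hF,
    sq_nonneg (ν i - μ i + 2 * (∑ j ∈ initSeg n i, ν j - ∑ j ∈ initSeg n i, μ j))]

def zeroExtend (w : Fin n → ℝ) (k : ℕ) : ℝ := if h : k < n then w ⟨k, h⟩ else 0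

def jump (w : Fin n → ℝ) (k : ℕ) : ℝ := zeroExtend w k - zeroExtend w (k + 1)

lemma eq_sum_jump_smul (w : Fin n → ℝ) :
    w = ∑ k ∈ range n,
      jump w k • fun i => if i ∈ initSeg n (k + 1) then (1 : ℝ) else 0 := by
  ext i
  have hIco : (range n).filter (fun k => (i : ℕ) < k + 1) = Ico (i : ℕ) n := by
    ext k
    simp only [mem_filter, mem_range, mem_Ico]
    omega
  have htele := sum_Ico_sub (fun k => -zeroExtend w k) i.2.le
  simp only [neg_sub_neg] at htele
  rw [Finset.sum_apply]
  simp only [Pi.smul_apply, smul_eq_mul, mul_ite, mul_one, mul_zero, mem_initSeg]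
  rw [← sum_filter, hIco]
  simp only [jump]
  rw [htele]
  simp [zeroExtend]

lemma sum_mul_eq_sum_jump_mul (w x : Fin n → ℝ) :
    ∑ i, x i * w i = ∑ k ∈ range n, jump w k * ∑ i ∈ initSeg n (k + 1), x i := by
  conv_lhs => rw [eq_sum_jump_smul w]
  simp only [Finset.sum_apply, Pi.smul_apply, smul_eq_mul, mul_sum]
  rw [sum_comm]
  refine sum_congr rfl fun k _ => ?_
  simp only [mul_ite, mul_one, mul_zero, sum_ite_mem, univ_inter]
  exact sum_congr rfl fun i _ => by ring

lemma conj_diagonal_eq_sum_jump (V : Mat n) (w : Fin n → ℝ) :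
    V * diagonal w * Vᵀ = ∑ k ∈ range n, jump w k • colProj V (initSeg n (k + 1)) := by
  conv_lhs => rw [eq_sum_jump_smul w]
  change V * diagonalLinearMap (Fin n) ℝ ℝ _ * Vᵀ = _
  rw [map_sum, mul_sum, sum_mul]
  simp only [map_smul, Matrix.mul_smul, Matrix.smul_mul]
  rfl

lemma exists_gap_of_jump {μ w : Fin n → ℝ} (hμ : Antitone μ)
    (hw : ∀ i j, μ i = μ j → w i = w j) (k : ℕ) :
    ∃ δ > 0, jump w k = 0 ∨
      ∀ s ∈ initSeg n (k + 1), ∀ t ∉ initSeg n (k + 1), μ t + δ ≤ μ s := by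
  by_cases hk : k + 1 < n
  · set a : Fin n := ⟨k, by omega⟩
    set b : Fin n := ⟨k + 1, hk⟩
    rcases (hμ (show a ≤ b from Fin.le_def.2 (by simp [a, b]))).lt_or_eq with hlt | heq
    · refine ⟨μ a - μ b, by linarith, Or.inr fun s hs t ht => ?_⟩
      simp only [mem_initSeg, not_lt] at hs ht
      linarith [hμ (show s ≤ a from Fin.le_def.2 (by simp only [a]; omega)),
        hμ (show b ≤ t from Fin.le_def.2 (by simpa [b] using ht))]
    · refine ⟨1, one_pos, Or.inl ?_⟩
      simp [jump, zeroExtend, hk, show k < n by omega, hw b a heq, a, b]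
  · exact ⟨1, one_pos, Or.inr fun s _ t ht => absurd (mem_initSeg.2 (by omega)) ht⟩

theorem exists_abs_sum_sub_trace_le {V X : Mat n} {μ w : Fin n → ℝ} (hV : Vᵀ * V = 1)
    (hX : X = V * diagonal μ * Vᵀ) (hμ : Antitone μ)
    (hw : ∀ i j, μ i = μ j → w i = w j) :
    ∃ K, ∀ (U Z : Mat n) (ν : Fin n → ℝ), Uᵀ * U = 1 → Z = U * diagonal ν * Uᵀ →
      Antitone ν →
      |∑ i, (ν i - μ i) * w i - (V * diagonal w * Vᵀ * (Z - X)).trace| ≤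
        K * ((Z - X) * (Z - X)ᵀ).trace := by
  choose δ hδ hgap using exists_gap_of_jump hμ hw
  refine ⟨∑ k ∈ range n, |jump w k| / (2 * δ k), fun U Z ν hU hZ hν => ?_⟩
  set F := ((Z - X) * (Z - X)ᵀ).trace
  set Δ : ℕ → ℝ := fun k =>
    ∑ i ∈ initSeg n (k + 1), ν i - ∑ i ∈ initSeg n (k + 1), μ i -
      (colProj V (initSeg n (k + 1)) * (Z - X)).trace
  have hdecomp : ∑ i, (ν i - μ i) * w i - (V * diagonal w * Vᵀ * (Z - X)).trace =
      ∑ k ∈ range n, jump w k * Δ k := by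
    rw [sum_mul_eq_sum_jump_mul, conj_diagonal_eq_sum_jump, Finset.sum_mul, trace_sum,
      ← sum_sub_distrib]
    refine sum_congr rfl fun k _ => ?_
    rw [Matrix.smul_mul, trace_smul, sum_sub_distrib, smul_eq_mul, ← mul_sub]
  have hterm : ∀ k, |jump w k * Δ k| ≤ |jump w k| / (2 * δ k) * F := by
    intro k
    have hΔ : 0 ≤ Δ k := sub_nonneg.2 <|
      trace_colProj_mul_le_sum_sub_sum hV hU hX hZ hν.le_of_mem_initSeg
    rw [abs_mul, abs_of_nonneg hΔ]
    rcases hgap k with h0 | hg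
    · simp [h0]
    · calc |jump w k| * Δ k ≤ |jump w k| * (F / (2 * δ k)) := mul_le_mul_of_nonneg_left
            (sum_sub_sum_sub_trace_le_of_gap hV hU hX hZ (hδ k) hg) (abs_nonneg _)
        _ = |jump w k| / (2 * δ k) * F := by ring
  rw [hdecomp, Finset.sum_mul]
  exact (abs_sum_le_sum_abs _ _).trans (sum_le_sum fun k _ => hterm k)

end Ordered

lemma trace_mul_transpose_self_le {ι : Type*} [Fintype ι] (M : Matrix ι ι ℝ) :
    (M * Mᵀ).trace ≤ Fintype.card ι ^ 2 * ‖M‖ ^ 2 := by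
  have hentry : ∀ i j, M i j * M i j ≤ ‖M‖ ^ 2 := fun i j => by
    rw [← sq, ← sq_abs, ← Real.norm_eq_abs]
    exact pow_le_pow_left₀ (norm_nonneg _) (norm_entry_le_entrywise_sup_norm M) 2
  calc (M * Mᵀ).trace ≤ ∑ _i : ι, ∑ _j : ι, ‖M‖ ^ 2 :=
        sum_le_sum fun i _ => sum_le_sum fun j _ => hentry i j
    _ = Fintype.card ι ^ 2 * ‖M‖ ^ 2 := by simp only [sum_const, card_univ, nsmul_eq_mul]; ring

lemma isBigO_trace_mul_transpose_self {ι α : Type*} [Fintype ι] (l : Filter α)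
    (f : α → Matrix ι ι ℝ) :
    (fun a => (f a * (f a)ᵀ).trace) =O[l] fun a => ‖f a‖ ^ 2 :=
  .of_bound (Fintype.card ι ^ 2) <| .of_forall fun a => by
    simpa [abs_of_nonneg (trace_mul_transpose_self_nonneg (f a))] using
      trace_mul_transpose_self_le (f a)

section Spectral

variable {n : ℕ} {eig : Mat n → Fin n → ℝ} {X : Mat n}

lemma isBigO_eig_sub (heig : IsEigsOf eig) (hX : X.IsSymm) :
    (fun Z : symSub n => eig Z.1 - eig X) =O[𝓝 ⟨X, hX⟩] fun Z => Z - ⟨X, hX⟩ := by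
  obtain ⟨hμ, V, hV, -, hXV⟩ := heig X hX
  refine isBigO_pi.2 fun i => ?_
  have hsq : ((fun Z : symSub n => eig Z.1 i - eig X i) ^ 2) =O[𝓝 ⟨X, hX⟩]
      ((fun Z : symSub n => ‖Z - ⟨X, hX⟩‖) ^ 2) := by
    refine IsBigO.trans (.of_bound (4 * n) <| .of_forall fun Z => ?_)
      (isBigO_trace_mul_transpose_self _ fun Z : symSub n => Z.1 - X)
    obtain ⟨hν, U, hU, -, hZU⟩ := heig Z.1 Z.2
    rw [Pi.pow_apply, Real.norm_of_nonneg (sq_nonneg _),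
      Real.norm_of_nonneg (trace_mul_transpose_self_nonneg _)]
    exact sq_sub_le_of_antitone hV hU hXV hZU hμ hν i
  exact (IsBigO.of_pow two_ne_zero hsq).of_norm_right

lemma isBigO_sum_sub_trace (heig : IsEigsOf eig) (hX : X.IsSymm) {V : Mat n} (hV : Vᵀ * V = 1)
    (hXV : X = V * diagonal (eig X) * Vᵀ) {w : Fin n → ℝ}
    (hw : ∀ i j, eig X i = eig X j → w i = w j) :
    (fun Z : symSub n =>
        ∑ i, (eig Z.1 i - eig X i) * w i - (V * diagonal w * Vᵀ * (Z.1 - X)).trace)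
      =O[𝓝 ⟨X, hX⟩] fun Z => ‖Z - ⟨X, hX⟩‖ ^ 2 := by
  obtain ⟨K, hK⟩ := exists_abs_sum_sub_trace_le hV hXV (heig X hX).1 hw
  refine IsBigO.trans (.of_bound K <| .of_forall fun Z => ?_)
    (isBigO_trace_mul_transpose_self _ fun Z : symSub n => Z.1 - X)
  obtain ⟨hν, U, hU, -, hZU⟩ := heig Z.1 Z.2
  rw [Real.norm_eq_abs, Real.norm_of_nonneg (trace_mul_transpose_self_nonneg _)]
  exact hK U Z.1 (eig Z.1) hU hZU hν

end Spectral

lemma HasFDerivAt.apply_single_eq_of_perm_invariant {ι : Type*} [Fintype ι] [DecidableEq ι]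
    {f : (ι → ℝ) → ℝ} {f' : (ι → ℝ) →L[ℝ] ℝ} {μ : ι → ℝ}
    (hsymm : ∀ (π : Equiv.Perm ι) (x : ι → ℝ), f (x ∘ π) = f x)
    (hf : HasFDerivAt f f' μ)
    {i j : ι} (hij : μ i = μ j) : f' (Pi.single i 1) = f' (Pi.single j 1) := by
  have hline :
      (fun t : ℝ => f (μ + t • Pi.single i 1)) = fun t => f (μ + t • Pi.single j 1) := by
    funext t
    rw [← hsymm (Equiv.swap i j)]
    congr 1
    ext k
    rcases eq_or_ne k i with rfl | hki
    · simp [hij, Pi.single_apply, eq_comm]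
    rcases eq_or_ne k j with rfl | hkj
    · simp [hij]
    · simp [Equiv.swap_apply_of_ne_of_ne hki hkj, hki, hkj]
  have hi := hf.hasLineDerivAt (Pi.single i 1)
  have hj := hf.hasLineDerivAt (Pi.single j 1)
  rw [HasLineDerivAt, hline] at hi
  exact hi.unique hj

def traceMulCLM {n : ℕ} (W : Mat n) : symSub n →L[ℝ] ℝ :=
  LinearMap.toContinuousLinearMap
    (traceLinearMap (Fin n) ℝ ℝ ∘ₗ LinearMap.mulLeft ℝ W ∘ₗ (symSub n).subtype)

theorem hasFDerivAt_comp_eig {n : ℕ} {eig : Mat n → Fin n → ℝ} (heig : IsEigsOf eig)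
    {X : Mat n} (hX : X.IsSymm) {V : Mat n} (hV : Vᵀ * V = 1)
    (hXV : X = V * diagonal (eig X) * Vᵀ)
    {f : (Fin n → ℝ) → ℝ} {f' : (Fin n → ℝ) →L[ℝ] ℝ}
    (hf : HasFDerivAt f f' (eig X))
    (hf' : ∀ i j, eig X i = eig X j → f' (Pi.single i 1) = f' (Pi.single j 1)) :
    HasFDerivAt (fun Z : symSub n => f (eig Z.1))
      (traceMulCLM (V * diagonal (fun i => f' (Pi.single i 1)) * Vᵀ)) ⟨X, hX⟩ := by
  have heigO := isBigO_eig_sub heig hX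
  have htendsto : Tendsto (fun Z : symSub n => eig Z.1) (𝓝 ⟨X, hX⟩) (𝓝 (eig X)) :=
    tendsto_sub_nhds_zero_iff.1 <| heigO.trans_tendsto <| tendsto_sub_nhds_zero_iff.2 tendsto_id
  have hlin := (hf.isLittleO.comp_tendsto htendsto).trans_isBigO heigO
  have hquad := (isBigO_sum_sub_trace heig hX hV hXV hf').trans_isLittleO
    (isLittleO_pow_sub_sub (⟨X, hX⟩ : symSub n) one_lt_two)
  refine .of_isLittleO <| (hlin.add hquad).congr_left fun Z => ?_
  have hf'_apply : f' (eig Z.1 - eig X) = ∑ i, (eig Z.1 i - eig X i) * f' (Pi.single i 1) := by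
    have hsingle : ∀ i : Fin n, (fun j => if i = j then (1 : ℝ) else 0) = Pi.single i 1 :=
      fun i => by ext j; simp [Pi.single_apply, eq_comm]
    simpa [hsingle] using f'.toLinearMap.pi_apply_eq_sum_univ (eig Z.1 - eig X)
  simp only [Function.comp_apply, hf'_apply]
  change _ = _ - _ - (V * diagonal _ * Vᵀ * (Z.1 - X)).trace
  ring

/-- Gradient formula for spectral functions: if the symmetric function `f` is
differentiable at `λ(X)`, then `f ∘ λ` is Fréchet differentiable at `X ∈ S^n` and for
every orthogonal `V` with `X = V (Diag λ(X)) Vᵀ` and every symmetric `H`,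
`∇(f∘λ)(X)[H] = tr((V (Diag ∇f(λ(X))) Vᵀ) H)`. -/
theorem statement2 {n : ℕ} (eig : Mat n → (Fin n → ℝ)) (heig : IsEigsOf eig)
    (X : Mat n) (hX : X.IsSymm)
    (f : (Fin n → ℝ) → ℝ)
    (hsymm : ∀ (π : Equiv.Perm (Fin n)) (x : Fin n → ℝ), f (x ∘ π) = f x)
    (hf : DifferentiableAt ℝ f (eig X)) :
    DifferentiableAt ℝ (fun Z : symSub n => f (eig Z.1)) ⟨X, hX⟩ ∧
    ∀ V : Mat n, Vᵀ * V = 1 → V * Vᵀ = 1 → X = V * Matrix.diagonal (eig X) * Vᵀ →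
      ∀ H : symSub n,
        fderiv ℝ (fun Z : symSub n => f (eig Z.1)) ⟨X, hX⟩ H =
          Matrix.trace
            ((V * Matrix.diagonal (fun i => fderiv ℝ f (eig X) (Pi.single i 1)) * Vᵀ) *
              H.1) := by
  obtain ⟨-, V₀, hV₀, -, hXV₀⟩ := heig X hX
  have hgrad : ∀ i j, eig X i = eig X j →
      fderiv ℝ f (eig X) (Pi.single i 1) = fderiv ℝ f (eig X) (Pi.single j 1) :=
    fun _ _ => hf.hasFDerivAt.apply_single_eq_of_perm_invariant hsymm
  refine ⟨(hasFDerivAt_comp_eig heig hX hV₀ hXV₀ hf.hasFDerivAt hgrad).differentiableAt,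
    fun V hV _ hXV H => ?_⟩
  rw [(hasFDerivAt_comp_eig heig hX hV hXV hf.hasFDerivAt hgrad).fderiv]
  rfl
end
end

section
/- Let T be a k-tensor on ℝ^n, let H_1,…,H_k be n×n real matrices, let V be an n×n orthogonal matrix, and let σ be a permutation of {1,…,k}. Setting H̃_i = Vᵀ H_i V for i = 1,…,k, the following identity holds: ⟨T, H̃_1 ∘_σ ⋯ ∘_σ H̃_k⟩ = ( V (Diag^σ T) Vᵀ )[H_1,…,H_k]. -/
open Matrix

noncomputable section

/-- A `k`-tensor on `ℝ^n`: a real number for every multi-index. -/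
abbrev Tens (k n : ℕ) := (Fin k → Fin n) → ℝ

/-- A `2k`-tensor on `ℝ^n`, with the indices grouped into `k` upper and `k` lower ones. -/
abbrev Tens2 (k n : ℕ) := (Fin k → Fin n) → (Fin k → Fin n) → ℝ

/-- Dot product of two `k`-tensors. -/
def tdot {k n : ℕ} (T₁ T₂ : Tens k n) : ℝ := ∑ i : Fin k → Fin n, T₁ i * T₂ i

/-- The `σ`-Hadamard product of `k` matrices:
`(H_1 ∘_σ ⋯ ∘_σ H_k)^{i_1…i_k} = H_1^{i_1 i_{σ⁻¹(1)}} ⋯ H_k^{i_k i_{σ⁻¹(k)}}`. -/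
def hadS {k n : ℕ} (σ : Equiv.Perm (Fin k)) (H : Fin k → Mat n) : Tens k n :=
  fun i => ∏ s : Fin k, H s (i s) (i (σ⁻¹ s))

/-- `Diag^σ T`, the `2k`-tensor equal to `T^{i_1…i_k}` when `i_s = j_{σ(s)}` for all `s`
and `0` otherwise. -/
def DiagS {k n : ℕ} (σ : Equiv.Perm (Fin k)) (T : Tens k n) : Tens2 k n :=
  fun i j => if ∀ s : Fin k, i s = j (σ s) then T i else 0

/-- Action of a `2k`-tensor on `k` matrices:
`S[H_1,…,H_k] = Σ S^{p_1…p_k}_{q_1…q_k} H_1^{p_1q_1} ⋯ H_k^{p_kq_k}`. -/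
def app2 {k n : ℕ} (S : Tens2 k n) (H : Fin k → Mat n) : ℝ :=
  ∑ p : Fin k → Fin n, ∑ q : Fin k → Fin n, S p q * ∏ s : Fin k, H s (p s) (q s)

/-- Conjugation of a `2k`-tensor by an orthogonal matrix:
`(V S Vᵀ)^{i_1…i_k j_1…j_k} = Σ S^{p…}_{q…} V^{i_1p_1}⋯V^{i_kp_k} V^{j_1q_1}⋯V^{j_kq_k}`. -/
def conj2 {k n : ℕ} (V : Mat n) (S : Tens2 k n) : Tens2 k n :=
  fun i j => ∑ p : Fin k → Fin n, ∑ q : Fin k → Fin n,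
    S p q * (∏ s : Fin k, V (i s) (p s)) * ∏ s : Fin k, V (j s) (q s)

/-!
The identity splits into two expansions. Acting with the conjugated tensor `V S Vᵀ` on
`H_1, …, H_k` is the same as acting with `S` on `Vᵀ H_1 V, …, Vᵀ H_k V` (expand the products of
entries and reorder the sums), and acting with `Diag^σ T` on matrices collapses the sum over the
lower indices to `j = i ∘ σ⁻¹`, which is exactly `⟨T, H_1 ∘_σ ⋯ ∘_σ H_k⟩`.
-/

theorem Matrix.transpose_mul_mul_apply {m n R : Type*} [Fintype m] [CommSemiring R]
    (V : Matrix m n R) (A : Matrix m m R) (x y : n) :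
    (Vᵀ * A * V) x y = ∑ a, ∑ b, V a x * A a b * V b y := by
  simp only [mul_apply, transpose_apply, Finset.sum_mul]
  exact Finset.sum_comm

theorem app2_conj2 {k n : ℕ} (V : Mat n) (S : Tens2 k n) (H : Fin k → Mat n) :
    app2 (conj2 V S) H = app2 S (fun s => Vᵀ * H s * V) := by
  simp only [app2, conj2, transpose_mul_mul_apply, Fintype.prod_sum, Finset.sum_mul,
    Finset.mul_sum, Finset.prod_mul_distrib]
  rw [Finset.sum_comm_cycle]
  refine Finset.sum_congr rfl fun p _ => ?_
  rw [Finset.sum_comm_cycle]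
  simp only [mul_comm, mul_assoc, mul_left_comm]

theorem app2_DiagS {k n : ℕ} (σ : Equiv.Perm (Fin k)) (T : Tens k n) (H : Fin k → Mat n) :
    app2 (DiagS σ T) H = tdot T (hadS σ H) := by
  have hdiag : ∀ p q : Fin k → Fin n, (∀ s, p s = q (σ s)) ↔ q = p ∘ σ.symm := by
    intro p q
    rw [funext_iff, σ.forall_congr_left]
    simp [eq_comm]
  simp only [app2, DiagS, tdot, hadS, hdiag, ite_mul, zero_mul, Finset.sum_ite_eq',
    Finset.mem_univ, if_true]
  rfl

theorem statement3_general {k n : ℕ} (T : Tens k n) (H : Fin k → Mat n)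
    (V : Mat n)
    (σ : Equiv.Perm (Fin k)) :
    tdot T (hadS σ (fun s => Vᵀ * H s * V)) = app2 (conj2 V (DiagS σ T)) H := by
  rw [app2_conj2, app2_DiagS]

/-- `⟨T, H̃_1 ∘_σ ⋯ ∘_σ H̃_k⟩ = (V (Diag^σ T) Vᵀ)[H_1,…,H_k]` for orthogonal `V`,
where `H̃_i = Vᵀ H_i V`. -/
theorem statement3 {k n : ℕ} (T : Tens k n) (H : Fin k → Mat n)
    (V : Mat n) (hV1 : Vᵀ * V = 1) (hV2 : V * Vᵀ = 1)
    (σ : Equiv.Perm (Fin k)) :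
    tdot T (hadS σ (fun s => Vᵀ * H s * V)) = app2 (conj2 V (DiagS σ T)) H :=
  statement3_general T H V σ
end
end

section
/- If a k-tensor-valued map μ ∈ ℝ^n ↦ T(μ) ∈ T^{k,n} is μ-symmetric and differentiable, then its differential ∇T, the (k+1)-tensor-valued map defined by ∇T(μ)[h_1,…,h_k,h] = (the directional derivative at μ in direction h of the map μ ↦ T(μ)[h_1,…,h_k]), is also μ-symmetric. -/
noncomputable section

/-- The value `T[h_1,…,h_k]` of a `k`-tensor, viewed as a `k`-linear form on `ℝ^n`. -/
def tapp {k n : ℕ} (T : Tens k n) (h : Fin k → (Fin n → ℝ)) : ℝ :=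
  ∑ i : Fin k → Fin n, T i * ∏ s : Fin k, h s (i s)

/-- A `k`-tensor-valued map `F` is `μ`-symmetric if
`F(Pμ)[Ph_1,…,Ph_k] = F(μ)[h_1,…,h_k]` for every permutation matrix `P`
(where `(Px)_i = x_{π(i)}`). -/
def MuSymmetric {k n : ℕ} (F : (Fin n → ℝ) → Tens k n) : Prop :=
  ∀ (μ : Fin n → ℝ) (π : Equiv.Perm (Fin n)) (h : Fin k → (Fin n → ℝ)),
    tapp (F (μ ∘ π)) (fun s => h s ∘ π) = tapp (F μ) h

/-- The differential of a `k`-tensor-valued map, as a `(k+1)`-tensor-valued map: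
`(∇T(μ))^{i_1…i_k p}` is the directional derivative at `μ`, in the direction `e^p`, of
`μ ↦ T(μ)^{i_1…i_k}`. -/
def tensDeriv {k n : ℕ} (F : (Fin n → ℝ) → Tens k n) : (Fin n → ℝ) → Tens (k + 1) n :=
  fun μ i =>
    fderiv ℝ (fun ν => F ν (Fin.init i)) μ (Pi.single (i (Fin.last k)) 1)

/-- The equivalence between `(Fin k → α) × α` and `Fin (k+1) → α` given by `Fin.snoc`. -/
def snocEquiv (k : ℕ) (α : Type*) : ((Fin k → α) × α) ≃ (Fin (k+1) → α) where
  toFun x := Fin.snoc x.1 x.2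
  invFun i := (Fin.init i, i (Fin.last k))
  left_inv := fun ⟨j, p⟩ => by simp
  right_inv := fun i => Fin.snoc_init_self i

lemma tapp_diff {k n : ℕ} {F : (Fin n → ℝ) → Tens k n}
    (hdiff : Differentiable ℝ F) (g : Fin k → (Fin n → ℝ)) :
    Differentiable ℝ (fun ν => tapp (F ν) g) := by
  unfold tapp
  exact Differentiable.fun_sum fun j _ =>
    ((differentiable_pi.mp hdiff j).mul_const _)

lemma pi_single_sum {n : ℕ} (x : Fin n → ℝ) :
    x = ∑ p : Fin n, x p • (Pi.single p 1 : Fin n → ℝ) := by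
  ext j
  simp [Pi.single_apply]

/-- The full application of the differential tensor is the directional derivative of the
full application in the last direction. -/
lemma tapp_tensDeriv {k n : ℕ} {F : (Fin n → ℝ) → Tens k n}
    (hdiff : Differentiable ℝ F) (μ : Fin n → ℝ) (h : Fin (k+1) → (Fin n → ℝ)) :
    tapp (tensDeriv F μ) h
      = fderiv ℝ (fun ν => tapp (F ν) (Fin.init h)) μ (h (Fin.last k)) := by
  have hd : ∀ j : Fin k → Fin n, DifferentiableAt ℝ (fun ν => F ν j) μ :=
    fun j => (differentiable_pi.mp hdiff j) μ
  have hinit : ∀ s : Fin k, Fin.init h s = h s.castSucc := fun s => rfl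
  have hrhs : fderiv ℝ (fun ν => tapp (F ν) (Fin.init h)) μ (h (Fin.last k))
      = ∑ j : Fin k → Fin n,
          (∏ s : Fin k, h s.castSucc (j s)) *
            fderiv ℝ (fun ν => F ν j) μ (h (Fin.last k)) := by
    unfold tapp
    rw [fderiv_fun_sum (fun j _ => (hd j).mul_const _)]
    rw [ContinuousLinearMap.sum_apply]
    refine Finset.sum_congr rfl fun j _ => ?_
    rw [fderiv_mul_const (hd j)]
    simp_rw [hinit]
    simp [mul_comm]
  rw [hrhs]
  unfold tapp
  rw [← Fintype.sum_equiv (snocEquiv k (Fin n))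
    (fun x => fderiv ℝ (fun ν => F ν x.1) μ (Pi.single x.2 1) *
        ((∏ s : Fin k, h s.castSucc (x.1 s)) * h (Fin.last k) x.2))
    (fun i => tensDeriv F μ i * ∏ s : Fin (k+1), h s (i s)) ?_]
  · rw [Fintype.sum_prod_type]
    refine Finset.sum_congr rfl fun j _ => ?_
    conv_rhs => rw [pi_single_sum (h (Fin.last k)), map_sum]
    rw [Finset.mul_sum]
    refine Finset.sum_congr rfl fun p _ => ?_
    rw [map_smul]
    simp only [smul_eq_mul]
    ring
  · intro x
    obtain ⟨j, p⟩ := x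
    simp only [snocEquiv, Equiv.coe_fn_mk, tensDeriv, Fin.init_snoc, Fin.snoc_last]
    rw [Fin.prod_univ_castSucc]
    simp only [Fin.snoc_castSucc, Fin.snoc_last]

/-- If a `k`-tensor-valued map is `μ`-symmetric and differentiable, then its differential
is also `μ`-symmetric. -/
theorem statement5 {k n : ℕ} (F : (Fin n → ℝ) → Tens k n)
    (hsymm : MuSymmetric F) (hdiff : Differentiable ℝ F) :
    MuSymmetric (tensDeriv F) := by
  intro μ π h
  rw [tapp_tensDeriv hdiff, tapp_tensDeriv hdiff]
  set L : (Fin n → ℝ) →L[ℝ] (Fin n → ℝ) :=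
    LinearMap.toContinuousLinearMap (LinearMap.funLeft ℝ ℝ (⇑π.symm)) with hL
  have hLapp : ∀ v : Fin n → ℝ, L v = v ∘ ⇑π.symm := fun v => rfl
  have hfun : (fun ν => tapp (F ν) (Fin.init fun s => h s ∘ ⇑π))
      = (fun ν => tapp (F ν) (Fin.init h)) ∘ L := by
    funext ν
    have := hsymm (ν ∘ ⇑π.symm) π (Fin.init h)
    have hν : (ν ∘ ⇑π.symm) ∘ ⇑π = ν := by
      funext i; simp
    rw [hν] at this
    simp only [Function.comp, hLapp]
    have hinit : (Fin.init fun s => h s ∘ ⇑π) = (fun s => Fin.init h s ∘ ⇑π) := rfl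
    rw [hinit]
    exact this
  rw [hfun]
  have hG : Differentiable ℝ (fun ν => tapp (F ν) (Fin.init h)) := tapp_diff hdiff _
  have hcomp := fderiv_comp (μ ∘ ⇑π) (hG (L (μ ∘ ⇑π))) (L.differentiableAt)
  rw [hcomp]
  have hLμ : L (μ ∘ ⇑π) = μ := by funext i; simp [hLapp]
  have hLh : L (h (Fin.last k) ∘ ⇑π) = h (Fin.last k) := by funext i; simp [hLapp]
  rw [ContinuousLinearMap.comp_apply, ContinuousLinearMap.fderiv, hLh, hLμ]
end
end

section
/- Let {M_m} be a sequence of n×n real symmetric matrices converging to 0 such that M_m/‖M_m‖ converges to a symmetric matrix M. Let μ ∈ ℝ^n have nonincreasing entries and let U_m → U be a convergent sequence of orthogonal matrices such that Diag μ + M_m = U_m (Diag λ(Diag μ + M_m)) U_mᵀ for all m. Then for every k-tensor T on ℝ^n that is μ-block-constant and every permutation σ of {1,…,k}: lim_{m→∞} ( U_m (Diag^σ T) U_mᵀ − Diag^σ T ) / ‖M_m‖ = Σ_{l=1}^k ( Diag^{σ_{(l)}} T^{(l)}_out )[M], the limit being taken in the finite-dimensional space of 2k-tensors on ℝ^n.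 -/
open Matrix Filter

noncomputable section

attribute [local instance] Matrix.normedAddCommGroup Matrix.normedSpace

/-- Contraction of the last matrix slot of a `2(k+1)`-tensor against a matrix `M`. -/
def contrM {k n : ℕ} (S : Tens2 (k + 1) n) (M : Mat n) : Tens2 k n :=
  fun p q => ∑ a : Fin n, ∑ b : Fin n, S (Fin.snoc p a) (Fin.snoc q b) * M a b

/-- A permutation of `{1,…,k}` viewed as a permutation of `{1,…,k+1}` fixing `k+1`. -/
def liftPerm {k : ℕ} (σ : Equiv.Perm (Fin k)) : Equiv.Perm (Fin (k + 1)) :=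
  (Equiv.permCongr (finSuccEquivLast (n := k)).symm) σ.optionCongr

/-- `σ_{(l)} = σ ∘ τ_l`, where `τ_l` is the transposition `(l, k+1)`. -/
def permIns {k : ℕ} (σ : Equiv.Perm (Fin k)) (l : Fin (k + 1)) : Equiv.Perm (Fin (k + 1)) :=
  liftPerm σ * Equiv.swap l (Fin.last k)

/-- `T^{(l)}_out` with respect to `μ`. -/
def Tout {k n : ℕ} (μ : Fin n → ℝ) (T : Tens k n) (l : Fin k) : Tens (k + 1) n :=
  fun i =>
    if μ (i l.castSucc) = μ (i (Fin.last k)) then 0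
    else (T (Function.update (Fin.init i) l (i (Fin.last k))) - T (Fin.init i)) /
      (μ (i (Fin.last k)) - μ (i l.castSucc))

/-- `T` is `μ`-block-constant. -/
def BlockConst {k n : ℕ} (μ : Fin n → ℝ) (T : Tens k n) : Prop :=
  ∀ i j : Fin k → Fin n, (∀ s : Fin k, μ (i s) = μ (j s)) → T i = T j

/-!
The eigenvalues of `diagonal μ + M m` tend to `μ`: the limit of `(U m)ᵀ (diagonal μ + M m) U m`
is a diagonal matrix, orthogonally similar to `diagonal μ` and nonincreasing, hence equal to it.
So `Ulim` commutes with `diagonal μ`, i.e. it is block diagonal for the level sets of `μ`, and the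
eigen-equation shows that the off-block part of `U m` is `‖M m‖ • (Z * Ulim + o(1))` with
`Z a b = Mlim a b / (μ b - μ a)`. Write `U m = V m + (U m - V m)` with `V m` the block-diagonal
part. As `T` is block-constant, conjugating `Diag^σ T` by `V m` only sees the Gram matrix
`V m * (V m)ᵀ`, which is `1 + o(‖M m‖)` because `Z` is skew-symmetric. The product rule applied
to `U m` and `V m` then gives the first-order term, which evaluates to
`∑ l, Diag^{σ_(l)} T^{(l)}_out [Mlim]`.
-/

open Asymptotics Topology

theorem HasStrictFDerivAt.tendsto_inv_smul_sub {E F α : Type*}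
    [NormedAddCommGroup E] [NormedSpace ℝ E] [NormedAddCommGroup F] [NormedSpace ℝ F]
    {f : E → F} {f' : E →L[ℝ] F} {a : E} (hf : HasStrictFDerivAt f f' a)
    {l : Filter α} {x y : α → E} {ε : α → ℝ} {d : E}
    (hx : Tendsto x l (𝓝 a)) (hy : Tendsto y l (𝓝 a))
    (hd : Tendsto (fun m => (ε m)⁻¹ • (x m - y m)) l (𝓝 d)) :
    Tendsto (fun m => (ε m)⁻¹ • (f (x m) - f (y m))) l (𝓝 (f' d)) := by
  have hrem : (fun m => (ε m)⁻¹ • (f (x m) - f (y m) - f' (x m - y m))) =o[l]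
      fun m => (ε m)⁻¹ • (x m - y m) :=
    (isBigO_refl (fun m => (ε m)⁻¹) l).smul_isLittleO
      (hf.isLittleO.comp_tendsto (hx.prodMk_nhds hy))
  have hrem0 := (isLittleO_one_iff ℝ).mp (hrem.trans_isBigO (hd.isBigO_one ℝ))
  have hlin := (f'.continuous.tendsto d).comp hd
  rw [← zero_add (f' d)]
  refine (hrem0.add hlin).congr fun m => ?_
  simp only [Function.comp_apply, map_smul, ← smul_add, sub_add_cancel]

theorem tendsto_inv_mul_prod_sub_prod {ι α : Type*} [Fintype ι] [DecidableEq ι]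
    {l : Filter α} {f g : α → ι → ℝ} {a d : ι → ℝ} {ε : α → ℝ}
    (hf : Tendsto f l (𝓝 a)) (hg : Tendsto g l (𝓝 a))
    (hd : Tendsto (fun m => (ε m)⁻¹ • (f m - g m)) l (𝓝 d)) :
    Tendsto (fun m => (ε m)⁻¹ * (∏ i, f m i - ∏ i, g m i)) l
      (𝓝 (∑ i, d i * ∏ j ∈ Finset.univ.erase i, a j)) := by
  simpa [mul_comm] using
    (hasStrictFDerivAt_finsetProd (u := Finset.univ) (x := a)).tendsto_inv_smul_sub hf hg hd

section Matrices

variable {ι : Type*}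

theorem Matrix.orthogonal_of_tendsto [Fintype ι] [DecidableEq ι] {α : Type*} {l : Filter α}
    [l.NeBot] {U : α → Matrix ι ι ℝ} {W : Matrix ι ι ℝ} (hU : Tendsto U l (𝓝 W))
    (horth : ∀ m, (U m)ᵀ * U m = 1 ∧ U m * (U m)ᵀ = 1) : Wᵀ * W = 1 ∧ W * Wᵀ = 1 := by
  have hUt : Tendsto (fun m => (U m)ᵀ) l (𝓝 Wᵀ) :=
    (continuous_id.matrix_transpose.tendsto W).comp hU
  exact ⟨tendsto_nhds_unique ((hUt.mul hU).congr fun m => (horth m).1) tendsto_const_nhds,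
    tendsto_nhds_unique ((hU.mul hUt).congr fun m => (horth m).2) tendsto_const_nhds⟩

theorem Matrix.tendsto_of_tendsto_diagonal [DecidableEq ι] {α : Type*} {l : Filter α} [l.NeBot]
    {v : α → ι → ℝ} {L : Matrix ι ι ℝ} (h : Tendsto (fun m => diagonal (v m)) l (𝓝 L)) :
    Tendsto v l (𝓝 L.diag) ∧ L = diagonal L.diag := by
  have hv : Tendsto v l (𝓝 L.diag) := by
    simpa [Function.comp_def] using (continuous_matrix_diag.tendsto L).comp h
  exact ⟨hv, tendsto_nhds_unique h ((continuous_id.matrix_diagonal.tendsto _).comp hv)⟩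

theorem Matrix.isSymm_of_tendsto {α : Type*} {l : Filter α} [l.NeBot] {A : α → Matrix ι ι ℝ}
    {L : Matrix ι ι ℝ} (hA : ∀ m, (A m).IsSymm) (h : Tendsto A l (𝓝 L)) : L.IsSymm :=
  tendsto_nhds_unique ((continuous_id.matrix_transpose.tendsto L).comp h)
    (h.congr fun m => (hA m).eq.symm)

theorem Matrix.apply_eq_zero_of_conj_diagonal [Fintype ι] [DecidableEq ι] {R : Type*}
    [CommRing R] [NoZeroDivisors R] {μ : ι → R} {W : Matrix ι ι R} (hW : W * Wᵀ = 1)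
    (h : Wᵀ * diagonal μ * W = diagonal μ) {a b : ι} (hab : μ a ≠ μ b) : W a b = 0 := by
  have hcomm : diagonal μ * W = W * diagonal μ :=
    calc diagonal μ * W = W * (Wᵀ * diagonal μ * W) := by simp only [← mul_assoc, hW, one_mul]
      _ = W * diagonal μ := by rw [h]
  have hentry := congrFun (congrFun hcomm a) b
  rw [diagonal_mul, mul_diagonal, mul_comm] at hentry
  by_contra hWab
  exact hab (mul_left_cancel₀ hWab hentry)

open Polynomial in
theorem eq_of_antitone_of_conj_diagonal {R : Type*} [Field R] [PartialOrder R] {n : ℕ}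
    {μ ν : Fin n → R} (hμ : Antitone μ) (hν : Antitone ν) {W : Matrix (Fin n) (Fin n) R}
    (hW : Wᵀ * W = 1) (h : Wᵀ * diagonal μ * W = diagonal ν) : ν = μ := by
  have hcharpoly : (diagonal ν).charpoly = (diagonal μ).charpoly := by
    rw [← h, Matrix.charpoly_mul_comm, ← mul_assoc, mul_eq_one_comm.mp hW, one_mul]
  have hroots : Finset.univ.val.map ν = Finset.univ.val.map μ := by
    have hroots_diag : ∀ w : Fin n → R, (diagonal w).charpoly.roots = Finset.univ.val.map w :=
      fun w => by
        rw [charpoly_diagonal,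
          roots_prod _ _ (Finset.prod_ne_zero_iff.mpr fun i _ => X_sub_C_ne_zero _)]
        simp
    rw [← hroots_diag, ← hroots_diag, hcharpoly]
  rw [Fin.univ_val_map, Fin.univ_val_map, Multiset.coe_eq_coe] at hroots
  refine List.ofFn_injective (hroots.eq_of_pairwise' (r := (· ≥ ·)) ?_ ?_)
  · exact List.pairwise_ofFn.mpr fun i j hij => hν hij.le
  · exact List.pairwise_ofFn.mpr fun i j hij => hμ hij.le

def blockPart (μ : ι → ℝ) (W : Matrix ι ι ℝ) : Matrix ι ι ℝ :=
  Matrix.of fun a b => if μ a = μ b then W a b else 0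

/-- Since `x / 0 = 0`, the entries with `μ a = μ b` vanish. -/
def divDiff (μ : ι → ℝ) (M : Matrix ι ι ℝ) : Matrix ι ι ℝ :=
  Matrix.of fun a b => M a b / (μ b - μ a)

theorem continuous_blockPart (μ : ι → ℝ) : Continuous (blockPart μ) :=
  continuous_pi fun a => continuous_pi fun b => by
    by_cases h : μ a = μ b <;> simp only [blockPart, of_apply, h, if_true, if_false] <;> fun_prop

theorem blockPart_eq_self {μ : ι → ℝ} {W : Matrix ι ι ℝ} (hW : ∀ a b, μ a ≠ μ b → W a b = 0) :
    blockPart μ W = W := by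
  ext a b
  by_cases h : μ a = μ b <;> simp [blockPart, h, hW a b]

theorem divDiff_mul_apply [Fintype ι] {μ : ι → ℝ} (M : Matrix ι ι ℝ) {W : Matrix ι ι ℝ}
    (hW : ∀ a b, μ a ≠ μ b → W a b = 0) (a b : ι) :
    (divDiff μ M * W) a b = (M * W) a b / (μ b - μ a) := by
  simp only [mul_apply, divDiff, of_apply, Finset.sum_div]
  refine Finset.sum_congr rfl fun x _ => ?_
  by_cases h : μ x = μ b
  · rw [h, div_mul_eq_mul_div]
  · simp [hW x b h]

theorem divDiff_transpose {μ : ι → ℝ} {M : Matrix ι ι ℝ} (hM : M.IsSymm) :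
    (divDiff μ M)ᵀ = -divDiff μ M := by
  ext a b
  rw [transpose_apply, neg_apply]
  simp only [divDiff, of_apply]
  rw [hM.apply a b, ← neg_sub, div_neg]

theorem tendsto_inv_smul_sub_blockPart [Fintype ι] [DecidableEq ι] {α : Type*} {l : Filter α}
    {μ : ι → ℝ} {M : α → Matrix ι ι ℝ} {N : Matrix ι ι ℝ} {ε : α → ℝ}
    (hM : Tendsto (fun m => (ε m)⁻¹ • M m) l (𝓝 N))
    {U : α → Matrix ι ι ℝ} {W : Matrix ι ι ℝ} (hU : Tendsto U l (𝓝 W))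
    (hW : ∀ a b, μ a ≠ μ b → W a b = 0) {ev : α → ι → ℝ} (hev : Tendsto ev l (𝓝 μ))
    (hUorth : ∀ m, (U m)ᵀ * U m = 1)
    (hdecomp : ∀ m, diagonal μ + M m = U m * diagonal (ev m) * (U m)ᵀ) :
    Tendsto (fun m => (ε m)⁻¹ • (U m - blockPart μ (U m))) l (𝓝 (divDiff μ N * W)) := by
  refine tendsto_pi_nhds.mpr fun a => tendsto_pi_nhds.mpr fun b => ?_
  rw [divDiff_mul_apply N hW]
  by_cases hab : μ a = μ b
  · simpa [blockPart, hab] using tendsto_const_nhds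
  have hba : μ b - μ a ≠ 0 := sub_ne_zero.mpr (Ne.symm hab)
  have hnum : Tendsto (fun m => ((ε m)⁻¹ • M m * U m) a b) l (𝓝 ((N * W) a b)) :=
    ((hM.mul hU).apply_nhds a).apply_nhds b
  have hden : Tendsto (fun m => ev m b - μ a) l (𝓝 (μ b - μ a)) :=
    (hev.apply_nhds b).sub_const _
  have hquot : Tendsto (fun m => ((ε m)⁻¹ • M m * U m) a b / (ev m b - μ a)) l
      (𝓝 ((N * W) a b / (μ b - μ a))) := hnum.div hden hba
  refine hquot.congr' ?_
  filter_upwards [hden.eventually_ne hba] with m hm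
  have heq : (diagonal μ + M m) * U m = U m * diagonal (ev m) := by
    rw [hdecomp m, mul_assoc, hUorth m, mul_one]
  have hentry : μ a * U m a b + (M m * U m) a b = U m a b * ev m b := by
    simpa [add_mul, diagonal_mul, mul_diagonal] using congrFun (congrFun heq a) b
  simp only [blockPart, smul_mul, Matrix.smul_apply, Matrix.sub_apply, of_apply, hab, if_false,
    sub_zero, smul_eq_mul]
  field_simp
  linear_combination (ε m)⁻¹ * hentry

end Matrices

theorem tendsto_eig_of_tendsto_diagonal {n : ℕ} {eig : Mat n → Fin n → ℝ} (heig : IsEigsOf eig)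
    {μ : Fin n → ℝ} (hμ : Antitone μ) {A : ℕ → Mat n} (hAsymm : ∀ m, (A m).IsSymm)
    (hA : Tendsto A atTop (𝓝 (diagonal μ))) {U : ℕ → Mat n} {W : Mat n}
    (hU : Tendsto U atTop (𝓝 W)) (hW : Wᵀ * W = 1) (hUorth : ∀ m, (U m)ᵀ * U m = 1)
    (hdecomp : ∀ m, A m = U m * diagonal (eig (A m)) * (U m)ᵀ) :
    Tendsto (fun m => eig (A m)) atTop (𝓝 μ) ∧ Wᵀ * diagonal μ * W = diagonal μ := by
  have hconj : ∀ m, (U m)ᵀ * A m * U m = diagonal (eig (A m)) := fun m => by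
    conv_lhs => rw [hdecomp m]
    simp only [← mul_assoc, hUorth m, one_mul]
    rw [mul_assoc, hUorth m, mul_one]
  have hUt : Tendsto (fun m => (U m)ᵀ) atTop (𝓝 Wᵀ) :=
    (continuous_id.matrix_transpose.tendsto W).comp hU
  obtain ⟨hν, hdiag⟩ := Matrix.tendsto_of_tendsto_diagonal (((hUt.mul hA).mul hU).congr hconj)
  have hνanti : Antitone (Wᵀ * diagonal μ * W).diag := fun b c hbc =>
    le_of_tendsto_of_tendsto' (hν.apply_nhds c) (hν.apply_nhds b)
      fun m => (heig (A m) (hAsymm m)).1 b c hbc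
  have hνμ := eq_of_antitone_of_conj_diagonal hμ hνanti hW hdiag
  rw [hνμ] at hν hdiag
  exact ⟨hν, hdiag⟩

theorem Finset.prod_ite_eq_mul_prod_erase {ι M : Type*} [Fintype ι] [DecidableEq ι]
    [CommMonoid M] (l : ι) (f g : ι → M) :
    ∏ s, (if s = l then f s else g s) = f l * ∏ s ∈ univ.erase l, g s := by
  rw [← mul_prod_erase univ _ (mem_univ l), if_pos rfl]
  exact congrArg (f l * ·) (prod_congr rfl fun s hs => if_neg (ne_of_mem_erase hs))

section Tensors

variable {k n : ℕ}

theorem diagS_apply (σ : Equiv.Perm (Fin k)) (T : Tens k n) (i j : Fin k → Fin n) :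
    DiagS σ T i j = T i * ∏ s, (if i s = j (σ s) then 1 else 0) := by
  simp only [DiagS, Finset.prod_boole, Finset.mem_univ, true_implies]
  split_ifs <;> simp

theorem conj2_diagS_apply (σ : Equiv.Perm (Fin k)) (T : Tens k n) (W : Mat n)
    (i j : Fin k → Fin n) :
    conj2 W (DiagS σ T) i j = ∑ p, T p * ∏ s, W (i s) (p s) * W (j (σ s)) (p s) := by
  refine Finset.sum_congr rfl fun p _ => ?_
  rw [Finset.sum_eq_single (fun t => p (σ.symm t))]
  · rw [DiagS, if_pos fun s => by simp, mul_assoc, Finset.prod_mul_distrib]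
    congr 2
    exact (Equiv.prod_comp σ fun t => W (j t) (p (σ.symm t))).symm.trans (by simp)
  · intro q _ hq
    rw [DiagS, if_neg, zero_mul, zero_mul]
    exact fun h => hq (funext fun t => by simpa using (h (σ.symm t)).symm)
  · simp

theorem BlockConst.sum_mul_prod {μ : Fin n → ℝ} {T : Tens k n} (hT : BlockConst μ T)
    (G : Fin k → Fin n → ℝ) (i₀ : Fin k → Fin n) (hG : ∀ s y, G s y ≠ 0 → μ y = μ (i₀ s)) :
    ∑ p, T p * ∏ s, G s (p s) = T i₀ * ∏ s, ∑ y, G s y := by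
  have hconst : ∀ p : Fin k → Fin n, T p * ∏ s, G s (p s) = T i₀ * ∏ s, G s (p s) := by
    intro p
    by_cases hp : ∏ s, G s (p s) = 0
    · simp [hp]
    · have hnz := Finset.prod_ne_zero_iff.mp hp
      rw [hT p i₀ fun s => hG s (p s) (hnz s (Finset.mem_univ s))]
  rw [Finset.sum_congr rfl fun p _ => hconst p, ← Finset.mul_sum, Fintype.prod_sum]

theorem BlockConst.sum_mul_mul_prod_erase {μ : Fin n → ℝ} {T : Tens k n} (hT : BlockConst μ T)
    (l : Fin k) (g : Fin n → ℝ) (H : Fin k → Fin n → ℝ) (i₀ : Fin k → Fin n)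
    (hg : ∀ y, g y ≠ 0 → μ y = μ (i₀ l)) (hH : ∀ s, s ≠ l → ∀ y, H s y ≠ 0 → μ y = μ (i₀ s)) :
    ∑ p, T p * (g (p l) * ∏ s ∈ Finset.univ.erase l, H s (p s)) =
      T i₀ * ((∑ y, g y) * ∏ s ∈ Finset.univ.erase l, ∑ y, H s y) := by
  have hfactor := hT.sum_mul_prod (fun s y => if s = l then g y else H s y) i₀ fun s y hy => by
    by_cases hs : s = l
    · subst hs; exact hg y (by simpa using hy)
    · exact hH s hs y (by simpa [hs] using hy)
  have hsplit : ∀ p : Fin k → Fin n, g (p l) * ∏ s ∈ Finset.univ.erase l, H s (p s) =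
      ∏ s, (if s = l then g (p s) else H s (p s)) := fun p =>
    (Finset.prod_ite_eq_mul_prod_erase l (fun s => g (p s)) fun s => H s (p s)).symm
  simp only [hsplit]
  rw [hfactor, ← Finset.prod_ite_eq_mul_prod_erase l (fun _ => ∑ y, g y) fun s => ∑ y, H s y]
  exact congrArg (T i₀ * ·) (Finset.prod_congr rfl fun s _ => by split_ifs <;> rfl)

theorem conj2_diagS_apply_of_block {μ : Fin n → ℝ} {T : Tens k n} (hT : BlockConst μ T)
    (σ : Equiv.Perm (Fin k)) {V : Mat n} (hV : ∀ a b, μ a ≠ μ b → V a b = 0)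
    (i j : Fin k → Fin n) :
    conj2 V (DiagS σ T) i j = T i * ∏ s, (V * Vᵀ) (i s) (j (σ s)) := by
  rw [conj2_diagS_apply, hT.sum_mul_prod _ i fun s y hy =>
    (not_imp_comm.mp (hV _ _) (left_ne_zero_of_mul hy)).symm]
  simp [mul_apply]

/-- The case split in `Tout` is absorbed by `x / 0 = 0`. -/
theorem Tout_snoc (μ : Fin n → ℝ) (T : Tens k n) (l : Fin k) (i : Fin k → Fin n) (a : Fin n) :
    Tout μ T l (Fin.snoc i a) = (T (Function.update i l a) - T i) / (μ a - μ (i l)) := by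
  simp only [Tout, Fin.snoc_castSucc, Fin.snoc_last, Fin.init_snoc]
  split_ifs with h
  · rw [h, sub_self, div_zero]
  · rfl

theorem permIns_castSucc_castSucc (σ : Equiv.Perm (Fin k)) (l t : Fin k) :
    permIns σ l.castSucc t.castSucc = if t = l then Fin.last k else (σ t).castSucc := by
  split_ifs with h
  · simp [h, permIns, liftPerm]
  · rw [permIns, Equiv.Perm.mul_apply, Equiv.swap_apply_of_ne_of_ne
      (Fin.castSucc_injective _ |>.ne h) (Fin.castSucc_lt_last t).ne]
    simp [liftPerm]

theorem permIns_castSucc_last (σ : Equiv.Perm (Fin k)) (l : Fin k) :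
    permIns σ l.castSucc (Fin.last k) = (σ l).castSucc := by
  simp [permIns, liftPerm]

theorem contrM_diagS_permIns_apply (σ : Equiv.Perm (Fin k)) (S : Tens (k + 1) n) (N : Mat n)
    (l : Fin k) (i j : Fin k → Fin n) :
    contrM (DiagS (permIns σ l.castSucc) S) N i j =
      S (Fin.snoc i (j (σ l))) * N (j (σ l)) (i l) *
        ∏ s ∈ Finset.univ.erase l, (if i s = j (σ s) then 1 else 0) := by
  simp only [contrM, diagS_apply, Fin.prod_univ_castSucc, permIns_castSucc_castSucc,
    permIns_castSucc_last, Fin.snoc_castSucc, Fin.snoc_last, apply_ite (Fin.snoc j _)]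
  have hprod : ∀ b, ∏ t, (if i t = (if t = l then b else j (σ t)) then (1 : ℝ) else 0) =
      (if i l = b then 1 else 0) * ∏ t ∈ Finset.univ.erase l, if i t = j (σ t) then 1 else 0 :=
    fun b => by
      rw [← Finset.prod_ite_eq_mul_prod_erase l fun t => if i t = b then (1 : ℝ) else 0]
      exact Finset.prod_congr rfl fun t _ => by split_ifs <;> rfl
  simp only [hprod, ite_mul, one_mul, zero_mul, mul_ite, mul_zero]
  simp [Finset.sum_ite_irrel, mul_comm, mul_left_comm]

/-- The derivative of `W ↦ conj2 W (DiagS σ T)` at `W` in the direction `X`. -/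
def conjDiagSDeriv (σ : Equiv.Perm (Fin k)) (T : Tens k n) (W X : Mat n) : Tens2 k n :=
  fun i j => ∑ p : Fin k → Fin n, T p * ∑ l,
    (X (i l) (p l) * W (j (σ l)) (p l) + W (i l) (p l) * X (j (σ l)) (p l)) *
      ∏ s ∈ Finset.univ.erase l, W (i s) (p s) * W (j (σ s)) (p s)

variable {α : Type*} {l : Filter α}

theorem tendsto_inv_smul_conj2_diagS_sub_conj2_diagS (σ : Equiv.Perm (Fin k)) (T : Tens k n)
    {U V : α → Mat n} {W X : Mat n} {ε : α → ℝ} (hU : Tendsto U l (𝓝 W))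
    (hV : Tendsto V l (𝓝 W)) (hX : Tendsto (fun m => (ε m)⁻¹ • (U m - V m)) l (𝓝 X)) :
    Tendsto (fun m => (ε m)⁻¹ • (conj2 (U m) (DiagS σ T) - conj2 (V m) (DiagS σ T))) l
      (𝓝 (conjDiagSDeriv σ T W X)) := by
  have hentry : ∀ {Y : α → Mat n} {Z : Mat n}, Tendsto Y l (𝓝 Z) → ∀ a b,
      Tendsto (fun m => Y m a b) l (𝓝 (Z a b)) := fun h a b => (h.apply_nhds a).apply_nhds b
  have hXe : ∀ a b, Tendsto (fun m => (ε m)⁻¹ * (U m a b - V m a b)) l (𝓝 (X a b)) :=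
    fun a b => (hentry hX a b).congr fun m => by simp
  refine tendsto_pi_nhds.mpr fun i => tendsto_pi_nhds.mpr fun j => ?_
  simp only [Pi.smul_apply, Pi.sub_apply, conj2_diagS_apply, smul_eq_mul,
    ← Finset.sum_sub_distrib, Finset.mul_sum]
  refine tendsto_finsetSum _ fun p _ => ?_
  have hprod := tendsto_inv_mul_prod_sub_prod (ε := ε)
    (f := fun m s => U m (i s) (p s) * U m (j (σ s)) (p s))
    (g := fun m s => V m (i s) (p s) * V m (j (σ s)) (p s))
    (tendsto_pi_nhds.mpr fun s => (hentry hU (i s) (p s)).mul (hentry hU (j (σ s)) (p s)))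
    (tendsto_pi_nhds.mpr fun s => (hentry hV (i s) (p s)).mul (hentry hV (j (σ s)) (p s)))
    (tendsto_pi_nhds.mpr fun s => (((hXe (i s) (p s)).mul (hentry hU (j (σ s)) (p s))).add
      ((hentry hV (i s) (p s)).mul (hXe (j (σ s)) (p s)))).congr fun m => by
        simp only [Pi.smul_apply, Pi.sub_apply, smul_eq_mul]
        ring)
  exact (hprod.const_mul (T p)).congr fun m => by ring

theorem tendsto_inv_smul_conj2_diagS_sub_diagS {μ : Fin n → ℝ} {T : Tens k n}
    (hT : BlockConst μ T) (σ : Equiv.Perm (Fin k)) {V : α → Mat n}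
    (hV : ∀ m a b, μ a ≠ μ b → V m a b = 0) {ε : α → ℝ}
    (hgram : Tendsto (fun m => V m * (V m)ᵀ) l (𝓝 1))
    (hrate : Tendsto (fun m => (ε m)⁻¹ • (V m * (V m)ᵀ - 1)) l (𝓝 0)) :
    Tendsto (fun m => (ε m)⁻¹ • (conj2 (V m) (DiagS σ T) - DiagS σ T)) l (𝓝 0) := by
  refine tendsto_pi_nhds.mpr fun i => tendsto_pi_nhds.mpr fun j => ?_
  have hprod := tendsto_inv_mul_prod_sub_prod (ε := ε)
    (f := fun m s => (V m * (V m)ᵀ) (i s) (j (σ s)))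
    (g := fun _ s => (1 : Mat n) (i s) (j (σ s)))
    (tendsto_pi_nhds.mpr fun s => (hgram.apply_nhds _).apply_nhds _) tendsto_const_nhds
    (tendsto_pi_nhds.mpr fun s => ((hrate.apply_nhds (i s)).apply_nhds (j (σ s))).congr
      fun m => by simp)
  simp only [Matrix.zero_apply, zero_mul, Finset.sum_const_zero] at hprod
  have hlim := hprod.const_mul (T i)
  rw [mul_zero] at hlim
  refine hlim.congr fun m => ?_
  simp only [Pi.smul_apply, Pi.sub_apply, smul_eq_mul, conj2_diagS_apply_of_block hT σ (hV m),
    diagS_apply, one_apply]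
  ring

theorem tendsto_inv_smul_conj2_diagS_sub {μ : Fin n → ℝ} {T : Tens k n} (hT : BlockConst μ T)
    (σ : Equiv.Perm (Fin k)) {U : α → Mat n} {W X : Mat n} {ε : α → ℝ}
    (hU : Tendsto U l (𝓝 W)) (hUorth : ∀ m, U m * (U m)ᵀ = 1)
    (hW : ∀ a b, μ a ≠ μ b → W a b = 0) (hW1 : W * Wᵀ = 1)
    (hX : Tendsto (fun m => (ε m)⁻¹ • (U m - blockPart μ (U m))) l (𝓝 X))
    (hXW : X * Wᵀ + W * Xᵀ = 0) :
    Tendsto (fun m => (ε m)⁻¹ • (conj2 (U m) (DiagS σ T) - DiagS σ T)) l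
      (𝓝 (conjDiagSDeriv σ T W X)) := by
  set V := fun m => blockPart μ (U m)
  have htr : ∀ {Y : α → Mat n} {Z : Mat n}, Tendsto Y l (𝓝 Z) →
      Tendsto (fun m => (Y m)ᵀ) l (𝓝 Zᵀ) :=
    fun h => (continuous_id.matrix_transpose.tendsto _).comp h
  have hV : Tendsto V l (𝓝 W) := by
    have hcont := ((continuous_blockPart μ).tendsto W).comp hU
    rwa [blockPart_eq_self hW] at hcont
  have hVblock : ∀ m a b, μ a ≠ μ b → V m a b = 0 := fun m a b hab => by
    simp [V, blockPart, hab]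
  have hgram : Tendsto (fun m => V m * (V m)ᵀ) l (𝓝 1) := hW1 ▸ hV.mul (htr hV)
  -- `V Vᵀ - 1 = V Vᵀ - U Uᵀ = -((U - V) Uᵀ + V (U - V)ᵀ)`
  have hrate : Tendsto (fun m => (ε m)⁻¹ • (V m * (V m)ᵀ - 1)) l (𝓝 0) := by
    have hlim := ((hX.mul (htr hU)).add (hV.mul (htr hX))).neg
    rw [hXW, neg_zero] at hlim
    refine hlim.congr fun m => ?_
    rw [← hUorth m, transpose_smul, smul_mul_assoc, mul_smul_comm, ← smul_add, ← smul_neg]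
    congr 1
    simp only [transpose_sub, sub_mul, mul_sub]
    abel
  have hsum := (tendsto_inv_smul_conj2_diagS_sub_conj2_diagS σ T hU hV hX).add
    (tendsto_inv_smul_conj2_diagS_sub_diagS hT σ hVblock hgram hrate)
  rw [add_zero] at hsum
  exact hsum.congr fun m => by rw [← smul_add, sub_add_sub_cancel]

theorem conjDiagSDeriv_divDiff_mul {μ : Fin n → ℝ} {T : Tens k n} (hT : BlockConst μ T)
    (σ : Equiv.Perm (Fin k)) {W N : Mat n} (hW : ∀ a b, μ a ≠ μ b → W a b = 0)
    (hW1 : W * Wᵀ = 1) (hN : N.IsSymm) :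
    conjDiagSDeriv σ T W (divDiff μ N * W) =
      ∑ l : Fin k, contrM (DiagS (permIns σ l.castSucc) (Tout μ T l)) N := by
  set X := divDiff μ N * W
  have hXW : X * Wᵀ = divDiff μ N := by rw [mul_assoc, hW1, mul_one]
  have hWblock : ∀ a y, W a y ≠ 0 → μ y = μ a := fun a y h => (not_imp_comm.mp (hW a y) h).symm
  have hXWe : ∀ a b, ∑ y, X a y * W b y = N a b / (μ b - μ a) := fun a b => by
    simpa [mul_apply, divDiff] using congrFun (congrFun hXW a) b
  have hWWe : ∀ a b, ∑ y, W a y * W b y = if a = b then 1 else 0 := fun a b => by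
    simpa [mul_apply, one_apply] using congrFun (congrFun hW1 a) b
  ext i j
  simp only [conjDiagSDeriv, Finset.sum_apply, Finset.mul_sum]
  rw [Finset.sum_comm]
  refine Finset.sum_congr rfl fun l _ => ?_
  rw [contrM_diagS_permIns_apply, Tout_snoc]
  simp only [add_mul, mul_add, Finset.sum_add_distrib]
  have hfirst := hT.sum_mul_mul_prod_erase l (fun y => X (i l) y * W (j (σ l)) y)
    (fun s y => W (i s) y * W (j (σ s)) y) (Function.update i l (j (σ l)))
    (fun y hy => by simpa using hWblock _ y (right_ne_zero_of_mul hy))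
    (fun s hs y hy => by simpa [hs] using hWblock _ y (left_ne_zero_of_mul hy))
  have hsecond := hT.sum_mul_mul_prod_erase l (fun y => W (i l) y * X (j (σ l)) y)
    (fun s y => W (i s) y * W (j (σ s)) y) i
    (fun y hy => hWblock _ y (left_ne_zero_of_mul hy))
    (fun s _ y hy => hWblock _ y (left_ne_zero_of_mul hy))
  rw [hfirst, hsecond]
  simp only [hXWe, hWWe, mul_comm (W (i l) _), hN.apply (i l), ← neg_sub (μ (i l)), div_neg]
  ring

end Tensors

theorem statement6_general {n k : ℕ} (eig : Mat n → (Fin n → ℝ)) (heig : IsEigsOf eig)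
    (μ : Fin n → ℝ) (hμ : ∀ i j : Fin n, i ≤ j → μ j ≤ μ i)
    (M : ℕ → Mat n) (hMsymm : ∀ m, (M m).IsSymm)
    (hM0 : Tendsto M atTop (nhds 0))
    (Mlim : Mat n) (hMdir : Tendsto (fun m => ‖M m‖⁻¹ • M m) atTop (nhds Mlim))
    (U : ℕ → Mat n) (hUorth : ∀ m, (U m)ᵀ * U m = 1 ∧ U m * (U m)ᵀ = 1)
    (Ulim : Mat n) (hU : Tendsto U atTop (nhds Ulim))
    (hdecomp : ∀ m, Matrix.diagonal μ + M m =
      U m * Matrix.diagonal (eig (Matrix.diagonal μ + M m)) * (U m)ᵀ)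
    (T : Tens k n) (hT : BlockConst μ T) (σ : Equiv.Perm (Fin k)) :
    Tendsto (fun m => ‖M m‖⁻¹ • (conj2 (U m) (DiagS σ T) - DiagS σ T)) atTop
      (nhds (∑ l : Fin k, contrM (DiagS (permIns σ l.castSucc) (Tout μ T l)) Mlim)) := by
  obtain ⟨hUtU, hUUt⟩ := Matrix.orthogonal_of_tendsto hU hUorth
  have hA : Tendsto (fun m => diagonal μ + M m) atTop (nhds (diagonal μ)) := by
    simpa using tendsto_const_nhds.add hM0
  have hAsymm : ∀ m, (diagonal μ + M m).IsSymm := fun m => (isSymm_diagonal μ).add (hMsymm m)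
  obtain ⟨hev, hconj⟩ := tendsto_eig_of_tendsto_diagonal heig (fun i j h => hμ i j h) hAsymm hA
    hU hUtU (fun m => (hUorth m).1) hdecomp
  have hblock : ∀ a b, μ a ≠ μ b → Ulim a b = 0 := fun a b =>
    Matrix.apply_eq_zero_of_conj_diagonal hUUt hconj
  have hMlim : Mlim.IsSymm := Matrix.isSymm_of_tendsto (fun m => (hMsymm m).smul _) hMdir
  have hskew : divDiff μ Mlim * Ulim * Ulimᵀ + Ulim * (divDiff μ Mlim * Ulim)ᵀ = 0 := by
    rw [mul_assoc, hUUt, mul_one, transpose_mul, ← mul_assoc, hUUt, one_mul,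
      divDiff_transpose hMlim, add_neg_cancel]
  have hmain := tendsto_inv_smul_conj2_diagS_sub hT σ hU (fun m => (hUorth m).2) hblock hUUt
    (tendsto_inv_smul_sub_blockPart hMdir hU hblock hev (fun m => (hUorth m).1) hdecomp) hskew
  rwa [conjDiagSDeriv_divDiff_mul hT σ hblock hUUt hMlim] at hmain

/-- Theorem 2.4 (Corollary 5.8 of [Sendov2003b]): the first-order expansion of
`U_m (Diag^σ T) U_mᵀ` along an eigenvalue perturbation. -/
theorem statement6 {n k : ℕ} (eig : Mat n → (Fin n → ℝ)) (heig : IsEigsOf eig)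
    (μ : Fin n → ℝ) (hμ : ∀ i j : Fin n, i ≤ j → μ j ≤ μ i)
    (M : ℕ → Mat n) (hMsymm : ∀ m, (M m).IsSymm) (hMne : ∀ m, M m ≠ 0)
    (hM0 : Tendsto M atTop (nhds 0))
    (Mlim : Mat n) (hMdir : Tendsto (fun m => ‖M m‖⁻¹ • M m) atTop (nhds Mlim))
    (U : ℕ → Mat n) (hUorth : ∀ m, (U m)ᵀ * U m = 1 ∧ U m * (U m)ᵀ = 1)
    (Ulim : Mat n) (hU : Tendsto U atTop (nhds Ulim))
    (hdecomp : ∀ m, Matrix.diagonal μ + M m =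
      U m * Matrix.diagonal (eig (Matrix.diagonal μ + M m)) * (U m)ᵀ)
    (T : Tens k n) (hT : BlockConst μ T) (σ : Equiv.Perm (Fin k)) :
    Tendsto (fun m => ‖M m‖⁻¹ • (conj2 (U m) (DiagS σ T) - DiagS σ T)) atTop
      (nhds (∑ l : Fin k, contrM (DiagS (permIns σ l.castSucc) (Tout μ T l)) Mlim)) :=
  statement6_general eig heig μ hμ M hMsymm hM0 Mlim hMdir U hUorth Ulim hU hdecomp T hT σ
end
end

section
/- Fix μ ∈ ℝ^n. Let U be an orthogonal matrix that is block-diagonal with respect to μ (U^{ij} = 0 whenever μ_i ≠ μ_j), let σ be a permutation of {1,…,k}, let M be a symmetric matrix, and let h ∈ ℝ^n be such that Uᵀ M_in U = Diag h, where (M_in)^{ij} = M^{ij} if μ_i = μ_j and 0 otherwise. Then: (1) for every μ-block-constant (k+1)-tensor T on ℝ^n, U ( Diag^σ (T[h]) ) Uᵀ = ( Diag^{σ_{(k+1)}} T )[M]; and (2) for every μ-block-constant k-tensor T on ℝ^n and every l ∈ {1,…,k}, U ( Diag^σ (T^{τ_l}[h]) ) Uᵀ = ( Diag^{σ_{(l)}}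 T^{τ_l}_in )[M]. -/
open Matrix

noncomputable section

/-- Contraction of the last slot of a `(k+1)`-tensor against a vector `h`:
`(T[h])^{i_1…i_k} = Σ_p T^{i_1…i_k p} h_p`. -/
def contrV {k n : ℕ} (T : Tens (k + 1) n) (h : Fin n → ℝ) : Tens k n :=
  fun i => ∑ a : Fin n, T (Fin.snoc i a) * h a

/-- `T^{τ_l}_in` with respect to `μ`. -/
def Tin {k n : ℕ} (μ : Fin n → ℝ) (T : Tens k n) (l : Fin k) : Tens (k + 1) n :=
  fun i => if μ (i l.castSucc) = μ (i (Fin.last k))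
    then T (Function.update (Fin.init i) l (i (Fin.last k))) else 0

/-- The lifting `T^{τ_l}` of a `k`-tensor to a `(k+1)`-tensor. -/
def Tlift {k n : ℕ} (T : Tens k n) (l : Fin k) : Tens (k + 1) n :=
  fun i => if i l.castSucc = i (Fin.last k) then T (Fin.init i) else 0

lemma forall_last_iff {k : ℕ} (P : Fin (k+1) → Prop) :
    (∀ t, P t) ↔ (∀ s : Fin k, P s.castSucc) ∧ P (Fin.last k) :=
  ⟨fun H => ⟨fun s => H _, H _⟩, fun H t => Fin.lastCases H.2 H.1 t⟩

lemma liftPerm_castSucc {k : ℕ} (σ : Equiv.Perm (Fin k)) (s : Fin k) :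
    liftPerm σ s.castSucc = (σ s).castSucc := by
  simp [liftPerm]

lemma liftPerm_last {k : ℕ} (σ : Equiv.Perm (Fin k)) :
    liftPerm σ (Fin.last k) = Fin.last k := by
  simp [liftPerm]

lemma conj2_diagS {k n : ℕ} (U : Mat n) (σ : Equiv.Perm (Fin k)) (S : Tens k n)
    (i j : Fin k → Fin n) :
    conj2 U (DiagS σ S) i j
      = ∑ p : Fin k → Fin n, S p * ∏ s, (U (i s) (p s) * U (j (σ s)) (p s)) := by
  unfold conj2 DiagS
  refine Finset.sum_congr rfl fun p _ => ?_
  have key : ∀ q : Fin k → Fin n,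
      (if ∀ s, p s = q (σ s) then S p else 0) * (∏ s, U (i s) (p s)) * ∏ s, U (j s) (q s)
      = if q = p ∘ σ.symm then S p * ∏ s, (U (i s) (p s) * U (j (σ s)) (p s)) else 0 := by
    intro q
    have hiff : (∀ s, p s = q (σ s)) ↔ q = p ∘ σ.symm := by
      constructor
      · intro H; funext t
        have := H (σ.symm t); simpa using this.symm
      · intro H s; subst H; simp
    by_cases hq : q = p ∘ σ.symm
    · rw [if_pos (hiff.2 hq), if_pos hq]
      subst hq
      have hprod : ∏ s, U (j (σ s)) (p s) = ∏ s, U (j s) (p (σ.symm s)) := by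
        rw [← Equiv.prod_comp σ (fun s => U (j s) (p (σ.symm s)))]
        simp
      rw [Finset.prod_mul_distrib, mul_assoc, hprod]
      rfl
    · rw [if_neg (fun H => hq (hiff.1 H)), if_neg hq, zero_mul, zero_mul]
  rw [Finset.sum_congr rfl fun q _ => key q, Finset.sum_ite_eq' Finset.univ (p ∘ σ.symm)]
  simp

lemma sum_factor {k n : ℕ} (μ : Fin n → ℝ) (U : Mat n)
    (hUblock : ∀ i j : Fin n, μ i ≠ μ j → U i j = 0)
    (i : Fin k → Fin n) (g : Fin k → Fin n → ℝ)
    (f : (Fin k → Fin n) → ℝ)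
    (hf : ∀ p, (∀ s, μ (p s) = μ (i s)) → f p = f i) :
    ∑ p : Fin k → Fin n, f p * ∏ s, (U (i s) (p s) * g s (p s))
      = f i * ∏ s, ∑ c, U (i s) c * g s c := by
  have h1 : ∀ p : Fin k → Fin n,
      f p * ∏ s, (U (i s) (p s) * g s (p s)) = f i * ∏ s, (U (i s) (p s) * g s (p s)) := by
    intro p
    by_cases hp : ∀ s, μ (p s) = μ (i s)
    · rw [hf p hp]
    · push_neg at hp
      obtain ⟨s, hs⟩ := hp
      have hz : ∏ t, (U (i t) (p t) * g t (p t)) = 0 :=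
        Finset.prod_eq_zero (Finset.mem_univ s)
          (by rw [hUblock _ _ (fun h => hs h.symm), zero_mul])
      rw [hz, mul_zero, mul_zero]
  rw [Finset.sum_congr rfl fun p _ => h1 p, ← Finset.mul_sum]
  congr 1
  rw [Finset.prod_univ_sum, Fintype.piFinset_univ]

lemma contract_h {n : ℕ} (μ : Fin n → ℝ) (U : Mat n) (hU2 : U * Uᵀ = 1)
    (hUblock : ∀ i j : Fin n, μ i ≠ μ j → U i j = 0)
    (M : Mat n) (h : Fin n → ℝ)
    (hMin : Uᵀ * (Matrix.of fun i j : Fin n => if μ i = μ j then M i j else 0) * U =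
      Matrix.diagonal h)
    (f : Fin n → ℝ) (hf : ∀ a b, μ a = μ b → f a = f b) :
    ∑ a, f a * h a = ∑ a, f a * M a a := by
  have hUUt : ∀ b c, (∑ a, U b a * U c a) = if b = c then (1:ℝ) else 0 := by
    intro b c
    have := congrFun (congrFun hU2 b) c
    simpa [Matrix.mul_apply, Matrix.one_apply] using this
  have hh : ∀ a, h a = ∑ c, ∑ b, (U b a * if μ b = μ c then M b c else 0) * U c a := by
    intro a
    have := congrFun (congrFun hMin a) a
    rw [Matrix.diagonal_apply_eq] at this
    rw [← this]
    simp only [Matrix.mul_apply, Matrix.transpose_apply, Matrix.of_apply, Finset.sum_mul]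
  calc ∑ a, f a * h a
      = ∑ a, ∑ c, ∑ b, (if μ b = μ c then M b c else 0) * (f a * (U b a * U c a)) := by
        refine Finset.sum_congr rfl fun a _ => ?_
        rw [hh a, Finset.mul_sum]
        refine Finset.sum_congr rfl fun c _ => ?_
        rw [Finset.mul_sum]
        exact Finset.sum_congr rfl fun b _ => by ring
    _ = ∑ c, ∑ b, (if μ b = μ c then M b c else 0) * (f b * ∑ a, U b a * U c a) := by
        rw [Finset.sum_comm]
        refine Finset.sum_congr rfl fun c _ => ?_
        rw [Finset.sum_comm]
        refine Finset.sum_congr rfl fun b _ => ?_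
        simp only [Finset.mul_sum]
        refine Finset.sum_congr rfl fun a _ => ?_
        by_cases hab : μ a = μ b
        · rw [hf a b hab]
        · rw [hUblock b a (fun H => hab H.symm)]
          ring
    _ = ∑ a, f a * M a a := by
        rw [Finset.sum_comm]
        refine Finset.sum_congr rfl fun b _ => ?_
        rw [Finset.sum_congr rfl (fun c _ => by
          rw [hUUt b c,
            show ((if μ b = μ c then M b c else 0) * (f b * if b = c then (1:ℝ) else 0))
              = if b = c then M b b * f b else 0 from by
                by_cases hbc : b = c
                · subst hbc; simp
                · simp [hbc]]), Finset.sum_ite_eq]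
        simp [mul_comm]

lemma permIns_last_eq {k : ℕ} (σ : Equiv.Perm (Fin k)) :
    permIns σ (Fin.last k) = liftPerm σ := by
  rw [permIns, Equiv.swap_self, ← Equiv.Perm.one_def, mul_one]

lemma min_entry {n : ℕ} (μ : Fin n → ℝ) (U : Mat n) (hU2 : U * Uᵀ = 1)
    (M : Mat n) (h : Fin n → ℝ)
    (hMin : Uᵀ * (Matrix.of fun i j : Fin n => if μ i = μ j then M i j else 0) * U =
      Matrix.diagonal h) :
    ∀ b c, (if μ b = μ c then M b c else 0) = ∑ a, U b a * (h a * U c a) := by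
  have hM2 : (Matrix.of fun i j : Fin n => if μ i = μ j then M i j else 0)
      = U * Matrix.diagonal h * Uᵀ := by
    calc (Matrix.of fun i j : Fin n => if μ i = μ j then M i j else 0)
        = (U * Uᵀ) * (Matrix.of fun i j : Fin n => if μ i = μ j then M i j else 0)
            * (U * Uᵀ) := by rw [hU2, one_mul, mul_one]
      _ = U * (Uᵀ * (Matrix.of fun i j : Fin n => if μ i = μ j then M i j else 0) * U) * Uᵀ := by
          simp only [Matrix.mul_assoc]
      _ = U * Matrix.diagonal h * Uᵀ := by rw [hMin]
  intro b c
  have := congrFun (congrFun hM2 b) c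
  rw [Matrix.of_apply] at this
  rw [this]
  simp [Matrix.mul_apply, Matrix.transpose_apply, Matrix.diagonal_apply, mul_ite, mul_zero,
    Finset.sum_ite_eq, Finset.sum_ite_eq', mul_assoc]

/-- Theorem 2.5 (Corollary 5.6 of [Sendov2003b]). -/
theorem statement7 {n k : ℕ} (μ : Fin n → ℝ)
    (U : Mat n) (hU1 : Uᵀ * U = 1) (hU2 : U * Uᵀ = 1)
    (hUblock : ∀ i j : Fin n, μ i ≠ μ j → U i j = 0)
    (σ : Equiv.Perm (Fin k))
    (M : Mat n) (hM : M.IsSymm) (h : Fin n → ℝ)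
    (hMin : Uᵀ * (Matrix.of fun i j : Fin n => if μ i = μ j then M i j else 0) * U =
      Matrix.diagonal h) :
    (∀ T : Tens (k + 1) n, BlockConst μ T →
      conj2 U (DiagS σ (contrV T h)) =
        contrM (DiagS (permIns σ (Fin.last k)) T) M) ∧
    (∀ T : Tens k n, BlockConst μ T → ∀ l : Fin k,
      conj2 U (DiagS σ (contrV (Tlift T l) h)) =
        contrM (DiagS (permIns σ l.castSucc) (Tin μ T l)) M) := by
  have hUUt : ∀ b c, (∑ a, U b a * U c a) = if b = c then (1:ℝ) else 0 := by
    intro b c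
    have := congrFun (congrFun hU2 b) c
    simpa [Matrix.mul_apply, Matrix.one_apply] using this
  have hMinE := min_entry μ U hU2 M h hMin
  constructor
  · -- Part 1
    intro T hT
    funext i j
    rw [conj2_diagS]
    have hQ : (∏ s, ∑ c, U (i s) c * U (j (σ s)) c)
        = if ∀ s, i s = j (σ s) then (1:ℝ) else 0 := by
      rw [Finset.prod_congr rfl fun s _ => hUUt (i s) (j (σ s)), Finset.prod_boole]
      simp
    have hL : ∑ p : Fin k → Fin n, contrV T h p * ∏ s, (U (i s) (p s) * U (j (σ s)) (p s))
        = (if ∀ s, i s = j (σ s) then (1:ℝ) else 0) * ∑ a, T (Fin.snoc i a) * h a := by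
      unfold contrV
      calc ∑ p : Fin k → Fin n, (∑ a, T (Fin.snoc p a) * h a)
              * ∏ s, (U (i s) (p s) * U (j (σ s)) (p s))
          = ∑ p : Fin k → Fin n, ∑ a, (T (Fin.snoc p a) * h a)
              * ∏ s, (U (i s) (p s) * U (j (σ s)) (p s)) :=
            Finset.sum_congr rfl fun p _ => Finset.sum_mul _ _ _
        _ = ∑ a, ∑ p : Fin k → Fin n, (T (Fin.snoc p a) * h a)
              * ∏ s, (U (i s) (p s) * U (j (σ s)) (p s)) := Finset.sum_comm
        _ = ∑ a, (T (Fin.snoc i a) * h a) * ∏ s, ∑ c, U (i s) c * U (j (σ s)) c := by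
            refine Finset.sum_congr rfl fun a _ => ?_
            exact sum_factor μ U hUblock i (fun s c => U (j (σ s)) c)
              (fun p => T (Fin.snoc p a) * h a)
              (fun p hp => by
                show T (Fin.snoc p a) * h a = T (Fin.snoc i a) * h a
                rw [hT (Fin.snoc p a) (Fin.snoc i a) (fun t => by
                  refine Fin.lastCases ?_ (fun s => ?_) t
                  · simp
                  · simpa using hp s)])
        _ = (if ∀ s, i s = j (σ s) then (1:ℝ) else 0) * ∑ a, T (Fin.snoc i a) * h a := by
            rw [Finset.sum_congr rfl fun a _ => by rw [hQ], ← Finset.sum_mul, mul_comm]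
    have hcond : ∀ a b : Fin n,
        (∀ t, Fin.snoc (α := fun _ => Fin n) i a t
            = Fin.snoc (α := fun _ => Fin n) j b (permIns σ (Fin.last k) t))
        ↔ ((∀ s, i s = j (σ s)) ∧ a = b) := by
      intro a b
      rw [forall_last_iff]
      simp [permIns_last_eq, liftPerm_castSucc, liftPerm_last]
    have hR : ∑ a, ∑ b, (if ((∀ s, i s = j (σ s)) ∧ a = b) then T (Fin.snoc i a) else 0) * M a b
        = (if ∀ s, i s = j (σ s) then (1:ℝ) else 0) * ∑ a, T (Fin.snoc i a) * M a a := by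
      by_cases hC : ∀ s, i s = j (σ s)
      · rw [if_pos hC, one_mul]
        refine Finset.sum_congr rfl fun a _ => ?_
        calc ∑ b, (if ((∀ s, i s = j (σ s)) ∧ a = b) then T (Fin.snoc i a) else 0) * M a b
            = ∑ b, (if a = b then T (Fin.snoc i a) * M a b else 0) := by
              refine Finset.sum_congr rfl fun b _ => ?_
              by_cases hab : a = b
              · rw [if_pos ⟨hC, hab⟩, if_pos hab]
              · rw [if_neg (fun H => hab H.2), if_neg hab, zero_mul]
          _ = T (Fin.snoc i a) * M a a := by rw [Finset.sum_ite_eq]; simp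
      · rw [if_neg hC, zero_mul]
        refine Finset.sum_eq_zero fun a _ => Finset.sum_eq_zero fun b _ => ?_
        rw [if_neg (fun H => hC H.1), zero_mul]
    rw [hL]
    simp only [contrM, DiagS]
    rw [Finset.sum_congr rfl fun a _ => Finset.sum_congr rfl fun b _ => by
      rw [if_congr (hcond a b) rfl rfl]]
    rw [hR]
    congr 1
    exact contract_h μ U hU2 hUblock M h hMin (fun a => T (Fin.snoc i a))
      (fun a b hab => hT _ _ (fun t => by
        refine Fin.lastCases ?_ (fun s => ?_) t
        · simpa using hab
        · simp))
  · -- Part 2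
    intro T hT l
    funext i j
    rw [conj2_diagS]
    -- simplify contrV (Tlift T l) h
    have hcv : ∀ p : Fin k → Fin n, contrV (Tlift T l) h p = T p * h (p l) := by
      intro p
      unfold contrV Tlift
      simp only [Fin.snoc_castSucc, Fin.snoc_last, Fin.init_snoc, ite_mul, zero_mul]
      rw [Finset.sum_ite_eq]
      simp
    have hpt : ∀ p : Fin k → Fin n,
        contrV (Tlift T l) h p * ∏ s, (U (i s) (p s) * U (j (σ s)) (p s))
        = T p * ∏ s, (U (i s) (p s) * (U (j (σ s)) (p s) * (if s = l then h (p s) else 1))) := by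
      intro p
      rw [hcv p]
      have h1 : ∏ s, (U (i s) (p s) * (U (j (σ s)) (p s) * (if s = l then h (p s) else 1)))
          = (∏ s, (U (i s) (p s) * U (j (σ s)) (p s))) * ∏ s, (if s = l then h (p s) else 1) := by
        rw [← Finset.prod_mul_distrib]
        exact Finset.prod_congr rfl fun s _ => by ring
      rw [h1, Finset.prod_ite_eq' Finset.univ l (fun s => h (p s)),
        if_pos (Finset.mem_univ l)]
      ring
    -- factor the sum
    have hL : ∑ p : Fin k → Fin n,
          contrV (Tlift T l) h p * ∏ s, (U (i s) (p s) * U (j (σ s)) (p s))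
        = T i * ((if μ (i l) = μ (j (σ l)) then M (i l) (j (σ l)) else 0)
            * if ∀ s ∈ Finset.univ.erase l, i s = j (σ s) then (1:ℝ) else 0) := by
      rw [Finset.sum_congr rfl fun p _ => hpt p]
      have hfac := sum_factor μ U hUblock i
        (fun s c => U (j (σ s)) c * (if s = l then h c else 1)) T (fun p hp => hT p i hp)
      rw [hfac]
      congr 1
      rw [← Finset.mul_prod_erase Finset.univ
        (fun s => ∑ c, U (i s) c * (U (j (σ s)) c * (if s = l then h c else 1)))
        (Finset.mem_univ l)]
      congr 1
      · rw [hMinE (i l) (j (σ l))]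
        refine Finset.sum_congr rfl fun c _ => ?_
        rw [if_pos rfl]; ring
      · rw [Finset.prod_congr rfl (fun s hs => by
          rw [show (∑ c, U (i s) c * (U (j (σ s)) c * (if s = l then h c else 1)))
              = if i s = j (σ s) then (1:ℝ) else 0 from by
            rw [← hUUt (i s) (j (σ s))]
            refine Finset.sum_congr rfl fun c _ => ?_
            rw [if_neg (Finset.ne_of_mem_erase hs), mul_one]]), Finset.prod_boole]
        convert rfl
    -- permutation values
    have hpi1 : permIns σ l.castSucc (Fin.last k) = (σ l).castSucc := by
      rw [permIns, Equiv.Perm.mul_apply, Equiv.swap_apply_right, liftPerm_castSucc]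
    have hpi2 : permIns σ l.castSucc l.castSucc = Fin.last k := by
      rw [permIns, Equiv.Perm.mul_apply, Equiv.swap_apply_left, liftPerm_last]
    have hpi3 : ∀ s : Fin k, s ≠ l → permIns σ l.castSucc s.castSucc = (σ s).castSucc := by
      intro s hs
      rw [permIns, Equiv.Perm.mul_apply,
        Equiv.swap_apply_of_ne_of_ne (by simpa [Fin.castSucc_inj] using hs)
          (Fin.castSucc_lt_last s).ne, liftPerm_castSucc]
    have hcond : ∀ a b : Fin n,
        (∀ t, Fin.snoc (α := fun _ => Fin n) i a t
            = Fin.snoc (α := fun _ => Fin n) j b (permIns σ l.castSucc t))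
        ↔ ((∀ s ∈ Finset.univ.erase l, i s = j (σ s)) ∧ i l = b ∧ a = j (σ l)) := by
      intro a b
      rw [forall_last_iff]
      constructor
      · rintro ⟨h1, h2⟩
        refine ⟨fun s hs => ?_, ?_, ?_⟩
        · have := h1 s
          rw [hpi3 s (Finset.ne_of_mem_erase hs)] at this
          simpa using this
        · have := h1 l
          rw [hpi2] at this
          simpa using this
        · rw [hpi1] at h2
          simpa using h2
      · rintro ⟨h1, h2, h3⟩
        constructor
        · intro s
          by_cases hs : s = l
          · subst hs
            rw [hpi2]
            simpa using h2
          · rw [hpi3 s hs]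
            simpa using h1 s (Finset.mem_erase.2 ⟨hs, Finset.mem_univ s⟩)
        · rw [hpi1]
          simpa using h3
    have hval : ∀ a b : Fin n,
        DiagS (permIns σ l.castSucc) (Tin μ T l) (Fin.snoc i a) (Fin.snoc j b)
        = if ((∀ s ∈ Finset.univ.erase l, i s = j (σ s)) ∧ i l = b ∧ a = j (σ l))
            then (if μ (i l) = μ a then T (Function.update i l a) else 0) else 0 := by
      intro a b
      unfold DiagS Tin
      simp only [Fin.snoc_castSucc, Fin.snoc_last, Fin.init_snoc]
      exact if_congr (hcond a b) rfl rfl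
    have hR : contrM (DiagS (permIns σ l.castSucc) (Tin μ T l)) M i j
        = if (∀ s ∈ Finset.univ.erase l, i s = j (σ s))
            then (if μ (i l) = μ (j (σ l)) then T (Function.update i l (j (σ l))) else 0)
              * M (j (σ l)) (i l) else 0 := by
      unfold contrM
      rw [Finset.sum_congr rfl fun a _ => Finset.sum_congr rfl fun b _ => by rw [hval a b]]
      by_cases hC : ∀ s ∈ Finset.univ.erase l, i s = j (σ s)
      · rw [if_pos hC]
        calc ∑ a, ∑ b, (if ((∀ s ∈ Finset.univ.erase l, i s = j (σ s)) ∧ i l = b ∧ a = j (σ l))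
                then (if μ (i l) = μ a then T (Function.update i l a) else 0) else 0) * M a b
            = ∑ a, (if a = j (σ l)
                then (if μ (i l) = μ a then T (Function.update i l a) else 0) * M a (i l)
                else 0) := by
              refine Finset.sum_congr rfl fun a _ => ?_
              calc ∑ b, (if ((∀ s ∈ Finset.univ.erase l, i s = j (σ s)) ∧ i l = b ∧ a = j (σ l))
                      then (if μ (i l) = μ a then T (Function.update i l a) else 0) else 0) * M a b
                  = ∑ b, (if i l = b
                      then (if a = j (σ l)
                        then (if μ (i l) = μ a then T (Function.update i l a) else 0) * M a b
                        else 0)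
                      else 0) := by
                    refine Finset.sum_congr rfl fun b _ => ?_
                    by_cases h1 : i l = b
                    · by_cases h2 : a = j (σ l)
                      · rw [if_pos ⟨hC, h1, h2⟩, if_pos h1, if_pos h2]
                      · rw [if_neg (fun H => h2 H.2.2), if_pos h1, if_neg h2, zero_mul]
                    · rw [if_neg (fun H => h1 H.2.1), if_neg h1, zero_mul]
                _ = if a = j (σ l)
                      then (if μ (i l) = μ a then T (Function.update i l a) else 0) * M a (i l)
                      else 0 := by rw [Finset.sum_ite_eq]; simp
          _ = (if μ (i l) = μ (j (σ l)) then T (Function.update i l (j (σ l))) else 0)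
                * M (j (σ l)) (i l) := by rw [Finset.sum_ite_eq']; simp
      · rw [if_neg hC]
        refine Finset.sum_eq_zero fun a _ => Finset.sum_eq_zero fun b _ => ?_
        rw [if_neg (fun H => hC H.1), zero_mul]
    rw [hL, hR]
    by_cases hC : ∀ s ∈ Finset.univ.erase l, i s = j (σ s)
    · rw [if_pos hC, if_pos hC, mul_one]
      by_cases hmu : μ (i l) = μ (j (σ l))
      · rw [if_pos hmu, if_pos hmu]
        have hTu : T (Function.update i l (j (σ l))) = T i := by
          refine hT _ _ fun s => ?_
          by_cases hs : s = l
          · subst hs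
            rw [Function.update_self]
            exact hmu.symm
          · rw [Function.update_of_ne hs]
        have hMs : M (j (σ l)) (i l) = M (i l) (j (σ l)) := by
          have := congrFun (congrFun hM (i l)) (j (σ l))
          rw [Matrix.transpose_apply] at this
          exact this
        rw [hTu, hMs]
      · rw [if_neg hmu, if_neg hmu]
        simp
    · rw [if_neg hC, if_neg hC]
      simp
end
end

section
/- Let T : ℝ^n → ℝ^n be a continuously differentiable, μ-symmetric 1-tensor-valued map. Then for every μ ∈ ℝ^n and all indices i_1, i_2 ∈ {1,…,n}: D_1T(μ)^{i_1 i_2} = ∫_0^1 [ (∇T)^{i_1 i_1}(ν_t) − (∇T)^{i_1 i_2}(ν_t) ] dt, where ν_t = μ + t(μ_{i_2} − μ_{i_1})(e^{i_1} − e^{i_2}), i.e. ν_t agrees with μ except that its i_1-coordinate is μ_{i_1} + t(μ_{i_2} − μ_{i_1}) and its i_2-coordinate is μ_{i_2} + t(μ_{i_1} − μ_{i_2}). -/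
noncomputable section

/-- The Jacobian matrix of a map `T : ℝ^n → ℝ^n`: `(∇T)^{ij}(μ) = ∂T^i(μ)/∂μ_j`. -/
def Jac {n : ℕ} (T : (Fin n → ℝ) → (Fin n → ℝ)) (μ : Fin n → ℝ) (i j : Fin n) : ℝ :=
  fderiv ℝ T μ (Pi.single j 1) i

/-!
Write `e = e^{i₁} - e^{i₂}` and `c = μ_{i₂} - μ_{i₁}`, so that `ν_t = μ + t c e`. Along this segment
`d/dt T^{i₁}(ν_t) = c ((∇T)^{i₁ i₁}(ν_t) - (∇T)^{i₁ i₂}(ν_t))`, and the endpoint `ν_1` is `μ` with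
the coordinates `i₁, i₂` swapped, so symmetry gives `T^{i₁}(ν_1) = T^{i₂}(μ)`. The fundamental theorem
of calculus thus yields `c · ∫₀¹ (…) dt = T^{i₂}(μ) - T^{i₁}(μ)`: divide by `c` when `c ≠ 0`; when
`c = 0` the path is constant and the integral is the integrand at `μ`.
-/

open intervalIntegral

section Segment

variable {E F ι : Type*} [NormedAddCommGroup E] [NormedSpace ℝ E]
  [NormedAddCommGroup F] [NormedSpace ℝ F] [CompleteSpace F]

theorem ContDiff.sub_eq_integral_fderiv {f : E → F} (hf : ContDiff ℝ 1 f) (x y : E) :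
    f (x + y) - f x = ∫ t in (0 : ℝ)..1, fderiv ℝ f (x + t • y) y := by
  have := map_add_eq_sum_add_integral_iteratedFDeriv (n := 0) (x := x) (y := y)
    fun t _ => hf.contDiffAt
  simpa [iteratedFDeriv_one_apply, sub_eq_iff_eq_add'] using this

theorem ContDiff.apply_sub_eq_integral_fderiv [Fintype ι] {f : E → ι → F}
    (hf : ContDiff ℝ 1 f) (x y : E) (i : ι) :
    f (x + y) i - f x i = ∫ t in (0 : ℝ)..1, fderiv ℝ f (x + t • y) y i := by
  have hfi : ContDiff ℝ 1 fun z => f z i := contDiff_pi.mp hf i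
  rw [hfi.sub_eq_integral_fderiv]
  congr! 2 with t
  rw [_root_.fderiv_apply (hf.differentiable one_ne_zero _)]
  rfl

end Segment

theorem add_smul_single_sub_single_eq_comp_swap {ι : Type*} [DecidableEq ι] (μ : ι → ℝ)
    (i₁ i₂ : ι) : μ + (μ i₂ - μ i₁) • (Pi.single i₁ 1 - Pi.single i₂ 1) = μ ∘ Equiv.swap i₁ i₂ := by
  funext j
  rcases eq_or_ne j i₁ with rfl | hj₁
  · rcases eq_or_ne j i₂ with rfl | hj₂ <;> simp [*]
  rcases eq_or_ne j i₂ with rfl | hj₂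
  · simp [hj₁]
  · simp [hj₁, hj₂, Equiv.swap_apply_of_ne_of_ne]

section Jacobian

variable {n : ℕ} (T : (Fin n → ℝ) → (Fin n → ℝ))

theorem fderiv_single_sub_single_apply (μ : Fin n → ℝ) (i j₁ j₂ : Fin n) :
    fderiv ℝ T μ (Pi.single j₁ 1 - Pi.single j₂ 1) i = Jac T μ i j₁ - Jac T μ i j₂ := by
  simp [Jac]

theorem mul_integral_jac_sub_jac_eq_sub (hT : ContDiff ℝ 1 T)
    (hsymm : ∀ (μ : Fin n → ℝ) (π : Equiv.Perm (Fin n)), T (μ ∘ π) = T μ ∘ π)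
    (μ : Fin n → ℝ) (i₁ i₂ : Fin n) :
    let ν : ℝ → Fin n → ℝ := fun t => μ + t • (μ i₂ - μ i₁) • (Pi.single i₁ 1 - Pi.single i₂ 1)
    (μ i₂ - μ i₁) * ∫ t in (0 : ℝ)..1, (Jac T (ν t) i₁ i₁ - Jac T (ν t) i₁ i₂) =
      T μ i₂ - T μ i₁ := by
  intro ν
  have hswap : T (μ ∘ Equiv.swap i₁ i₂) i₁ = T μ i₂ := by simp [hsymm]
  rw [← hswap, ← add_smul_single_sub_single_eq_comp_swap, hT.apply_sub_eq_integral_fderiv,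
    ← integral_const_mul]
  simp only [map_smul, Pi.smul_apply, fderiv_single_sub_single_apply, smul_eq_mul, ν]

end Jacobian

/-- Lemma 7.1: integral representation of the matrix `D₁T(μ)` for a continuously
differentiable `μ`-symmetric map `T : ℝ^n → ℝ^n`. -/
theorem statement18 {n : ℕ} (T : (Fin n → ℝ) → (Fin n → ℝ))
    (hT : ContDiff ℝ 1 T)
    (hsymm : ∀ (μ : Fin n → ℝ) (π : Equiv.Perm (Fin n)), T (μ ∘ π) = T μ ∘ π) :
    ∀ (μ : Fin n → ℝ) (i₁ i₂ : Fin n),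
      (if i₁ = i₂ then (0 : ℝ)
        else if μ i₁ = μ i₂ then Jac T μ i₁ i₁ - Jac T μ i₁ i₂
        else (T μ i₂ - T μ i₁) / (μ i₂ - μ i₁)) =
      ∫ t in (0 : ℝ)..1,
        (Jac T (fun j => μ j + t * (μ i₂ - μ i₁) *
            ((if j = i₁ then (1 : ℝ) else 0) - if j = i₂ then (1 : ℝ) else 0)) i₁ i₁ -
          Jac T (fun j => μ j + t * (μ i₂ - μ i₁) *
            ((if j = i₁ then (1 : ℝ) else 0) - if j = i₂ then (1 : ℝ) else 0)) i₁ i₂) := by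
  intro μ i₁ i₂
  have hν (t : ℝ) : (fun j => μ j + t * (μ i₂ - μ i₁) *
      ((if j = i₁ then (1 : ℝ) else 0) - if j = i₂ then (1 : ℝ) else 0)) =
      μ + t • (μ i₂ - μ i₁) • (Pi.single i₁ 1 - Pi.single i₂ 1) := by
    funext j
    simp [Pi.single_apply, mul_assoc]
  simp_rw [hν]
  split_ifs with h₁₂ hμ
  · simp [h₁₂]
  · simp [hμ]
  · rw [div_eq_iff (sub_ne_zero.mpr (Ne.symm hμ)), mul_comm,
      mul_integral_jac_sub_jac_eq_sub T hT hsymm]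
end
end
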